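/- arXiv:1211.2127 — 10 statements merged into one kernel-verified Lean document; each statement's English description precedes it below -/
import Mathlib

section
/- Let H be a Hilbert space and A a bounded normal operator on H. Then 0 is at most an isolated point of the spectrum σ(A) (i.e. 0 ∉ σ(A) or 0 is an isolated point of σ(A)) if and only if the range R(A) is closed in H. -/
/-!
If `0` is not an accumulation point of `σ(A)`, then `z ↦ z⁻¹` (with Lean's `0⁻¹ = 0`) is
continuous on `σ(A)`, and `B = cfc (·⁻¹) A` satisfies `A B A = A` because `z z⁻¹ z = z` for every
`z`. Hence `range A` is the closed set of fixed points of `A B`.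

Conversely, if `range A` is closed, the open mapping theorem gives `c > 0` with `c ‖v‖ ≤ ‖A v‖`
on `(ker A)ᗮ`. A normal `A` maps `(ker A)ᗮ` into itself, so on `ker A ⊕ (ker A)ᗮ` the operator
`λ - A` acts as `λ ⊕ (λ - A)`, which is bounded below by `min ‖λ‖ (c - ‖λ‖)` when
`0 < ‖λ‖ < c`. A normal operator that is bounded below is invertible, since its range is closed
and its orthogonal complement is the kernel, which is trivial.
-/

open ContinuousLinearMap Filter Topology

theorem IsClosed.notMem_or_eventually_nhdsNE_notMem_iff {X : Type*} [TopologicalSpace X]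
    {s : Set X} (hs : IsClosed s) {x : X} :
    (x ∉ s ∨ (x ∈ s ∧ ∀ᶠ z in 𝓝[≠] x, z ∉ s)) ↔ ∀ᶠ z in 𝓝[≠] x, z ∉ s := by
  refine ⟨?_, fun h ↦ (em' (x ∈ s)).imp_right fun hx ↦ ⟨hx, h⟩⟩
  rintro (hx | ⟨-, h⟩)
  · exact eventually_nhdsWithin_of_eventually_nhds (hs.isOpen_compl.mem_nhds hx)
  · exact h

theorem continuousOn_inv₀_of_eventually_nhdsNE_notMem {G₀ : Type*} [GroupWithZero G₀]
    [TopologicalSpace G₀] [ContinuousInv₀ G₀] {s : Set G₀}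
    (hs : ∀ᶠ z in 𝓝[≠] 0, z ∉ s) : ContinuousOn Inv.inv s := by
  intro z hz
  rcases eq_or_ne z 0 with rfl | hz0
  · have hs' : ∀ᶠ w in 𝓝[s] 0, w = 0 := by
      filter_upwards [nhdsWithin_le_nhds (eventually_nhdsWithin_iff.mp hs), self_mem_nhdsWithin]
        with w hw hws
      by_contra hw0
      exact hw hw0 hws
    exact tendsto_const_nhds.congr' (hs'.mono fun w hw ↦ by rw [hw])
  · exact (continuousAt_inv₀ hz0).continuousWithinAt

theorem ContinuousLinearMap.isClosed_range_of_mul_mul_eq_self {R M : Type*} [Semiring R]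
    [TopologicalSpace M] [T2Space M] [AddCommMonoid M] [Module R M] {A : M →L[R] M}
    (B : M →L[R] M) (h : A * B * A = A) : IsClosed (Set.range A) := by
  have hrange : Set.range A = {x | A (B x) = x} := by
    ext x
    refine ⟨?_, fun hx ↦ ⟨B x, hx⟩⟩
    rintro ⟨y, rfl⟩
    exact congr($h y)
  rw [hrange]
  exact isClosed_eq (by fun_prop) continuous_id

theorem mul_cfc_inv_mul_cancel {A : Type*} [Ring A] [StarRing A] [Algebra ℂ A]
    [TopologicalSpace A] [ContinuousFunctionalCalculus ℂ A IsStarNormal] (a : A) [IsStarNormal a]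
    (ha : ∀ᶠ z in 𝓝[≠] 0, z ∉ spectrum ℂ a) : a * cfc (·⁻¹ : ℂ → ℂ) a * a = a := by
  have hinv := continuousOn_inv₀_of_eventually_nhdsNE_notMem ha
  calc a * cfc (·⁻¹ : ℂ → ℂ) a * a = cfc (fun z : ℂ ↦ z * z⁻¹ * z) a := by
        rw [cfc_mul (fun z : ℂ ↦ z * z⁻¹) (fun z ↦ z) a (continuousOn_id.mul hinv) continuousOn_id,
          cfc_mul (fun z ↦ z) (·⁻¹) a continuousOn_id hinv, cfc_id' ℂ a]
    _ = a := by simp only [mul_inv_mul_cancel, cfc_id' ℂ a]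

theorem IsStarNormal.algebraMap_sub {R A : Type*} [CommSemiring R] [Ring A] [StarRing A]
    [Algebra R A] (r : R) (a : A) [IsStarNormal a] : IsStarNormal (algebraMap R A r - a) :=
  haveI : IsStarNormal (algebraMap R A r) := ⟨Algebra.commute_algebraMap_right r _⟩
  (Algebra.commute_algebraMap_left r _).isStarNormal_sub

section HilbertSpace

variable {𝕜 E : Type*} [RCLike 𝕜] [NormedAddCommGroup E] [InnerProductSpace 𝕜 E] [CompleteSpace E]

theorem ContinuousLinearMap.exists_pos_mul_norm_le_norm_apply_of_isClosed_range {F : Type*}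
    [NormedAddCommGroup F] [NormedSpace 𝕜 F] [CompleteSpace F] (A : E →L[𝕜] F)
    (hA : IsClosed (Set.range A)) : ∃ c > 0, ∀ v ∈ A.kerᗮ, c * ‖v‖ ≤ ‖A v‖ := by
  set B := A ∘L A.kerᗮ.subtypeL
  have hinj : Function.Injective B := by
    rw [injective_iff_map_eq_zero]
    intro v hv
    exact Subtype.ext (A.ker.orthogonal_disjoint.le_bot ⟨hv, v.2⟩)
  have hrange : Set.range B = Set.range A := by
    refine subset_antisymm (Set.range_subset_iff.mpr fun v ↦ ⟨v, rfl⟩) ?_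
    rintro _ ⟨x, rfl⟩
    obtain ⟨u, hu, v, hv, rfl⟩ := A.ker.exists_add_mem_mem_orthogonal x
    exact ⟨⟨v, hv⟩, by simp [B, show A u = 0 from hu]⟩
  obtain ⟨K, hK⟩ := B.antilipschitz_of_injective_of_isClosed_range hinj (hrange ▸ hA)
  refine ⟨(K + 1)⁻¹, by positivity, fun v hv ↦ ?_⟩
  rw [inv_mul_le_iff₀ (by positivity)]
  calc ‖v‖ ≤ K * ‖A v‖ := B.bound_of_antilipschitz hK ⟨v, hv⟩
    _ ≤ (K + 1) * ‖A v‖ := by gcongr; simp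

theorem IsStarNormal.mul_norm_le_norm_algebraMap_sub_apply {T : E →L[𝕜] E} (hT : IsStarNormal T)
    {c : ℝ} (hc : ∀ v ∈ T.kerᗮ, c * ‖v‖ ≤ ‖T v‖) {z : 𝕜} (hz : ‖z‖ ≤ c) (x : E) :
    min ‖z‖ (c - ‖z‖) * ‖x‖ ≤ ‖(algebraMap 𝕜 (E →L[𝕜] E) z - T) x‖ := by
  obtain ⟨u, hu, v, hv, rfl⟩ := T.ker.exists_add_mem_mem_orthogonal x
  set m := min ‖z‖ (c - ‖z‖)
  have hm : 0 ≤ m := le_min (norm_nonneg z) (sub_nonneg.mpr hz)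
  have hTv : T v ∈ T.kerᗮ :=
    hT.orthogonal_range ▸ Submodule.le_orthogonal_orthogonal _ (LinearMap.mem_range_self _ v)
  set w := z • v - T v
  have hw : w ∈ T.kerᗮ := Submodule.sub_mem _ (Submodule.smul_mem _ z hv) hTv
  have happly : (algebraMap 𝕜 (E →L[𝕜] E) z - T) (u + v) = z • u + w := by
    simp only [sub_apply, ContinuousLinearMap.algebraMap_apply, map_add, show T u = 0 from hu, w]
    abel
  have hmz : m ≤ ‖z‖ := min_le_left _ _
  have hmw : m * ‖v‖ ≤ ‖w‖ := by
    calc m * ‖v‖ ≤ (c - ‖z‖) * ‖v‖ := by gcongr; exact min_le_right _ _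
      _ = c * ‖v‖ - ‖z • v‖ := by rw [norm_smul]; ring
      _ ≤ ‖T v‖ - ‖z • v‖ := by gcongr; exact hc v hv
      _ ≤ ‖w‖ := by rw [norm_sub_rev]; exact norm_sub_norm_le _ _
  have hx := norm_add_sq_eq_norm_sq_add_norm_sq_of_inner_eq_zero u v
    (Submodule.inner_right_of_mem_orthogonal hu hv)
  have hy := norm_add_sq_eq_norm_sq_add_norm_sq_of_inner_eq_zero (z • u) w
    (Submodule.inner_right_of_mem_orthogonal (Submodule.smul_mem _ z hu) hw)
  rw [happly, mul_self_le_mul_self_iff (by positivity) (norm_nonneg _)]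
  calc m * ‖u + v‖ * (m * ‖u + v‖) = m * m * (‖u‖ * ‖u‖) + (m * ‖v‖) * (m * ‖v‖) := by
        rw [mul_mul_mul_comm, hx]; ring
    _ ≤ ‖z‖ * ‖z‖ * (‖u‖ * ‖u‖) + ‖w‖ * ‖w‖ := by gcongr
    _ = ‖z • u + w‖ * ‖z • u + w‖ := by rw [hy, norm_smul]; ring

theorem IsStarNormal.isUnit_of_antilipschitz {T : E →L[𝕜] E} (hT : IsStarNormal T) {K : NNReal}
    (hK : AntilipschitzWith K T) : IsUnit T := by
  rw [isUnit_iff_bijective, bijective_iff_dense_range_and_antilipschitz]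
  refine ⟨?_, K, hK⟩
  rw [Submodule.topologicalClosure_eq_top_iff, hT.orthogonal_range]
  exact LinearMap.ker_eq_bot.mpr hK.injective

theorem IsStarNormal.notMem_spectrum_of_norm_lt {T : E →L[𝕜] E} (hT : IsStarNormal T) {c : ℝ}
    (hc : ∀ v ∈ T.kerᗮ, c * ‖v‖ ≤ ‖T v‖) {z : 𝕜} (hz0 : z ≠ 0) (hzc : ‖z‖ < c) :
    z ∉ spectrum 𝕜 T := by
  set m := min ‖z‖ (c - ‖z‖)
  have hm : 0 < m := lt_min (norm_pos_iff.mpr hz0) (sub_pos.mpr hzc)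
  have hS := IsStarNormal.algebraMap_sub z T
  rw [spectrum.notMem_iff]
  refine hS.isUnit_of_antilipschitz (K := m.toNNReal⁻¹) (antilipschitz_of_bound _ fun x ↦ ?_)
  rw [NNReal.coe_inv, Real.coe_toNNReal _ hm.le, le_inv_mul_iff₀ hm]
  exact hT.mul_norm_le_norm_algebraMap_sub_apply hc hzc.le x

end HilbertSpace

/-- For a bounded normal operator `A` on a complex Hilbert space, `0` is at most an
isolated point of the spectrum of `A` (i.e. `0 ∉ σ(A)` or `0` is an isolated point of
`σ(A)`) if and only if the range of `A` is closed. -/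
theorem statement3 {H : Type*} [NormedAddCommGroup H] [InnerProductSpace ℂ H]
    [CompleteSpace H]
    (A : H →L[ℂ] H) (hA : A.adjoint ∘L A = A ∘L A.adjoint) :
    ((0 : ℂ) ∉ spectrum ℂ A ∨
      ((0 : ℂ) ∈ spectrum ℂ A ∧
        ∀ᶠ z in nhdsWithin (0 : ℂ) {(0 : ℂ)}ᶜ, z ∉ spectrum ℂ A)) ↔
      IsClosed (Set.range A) := by
  have hA' : IsStarNormal A :=
    ⟨by simpa only [Commute, SemiconjBy, star_eq_adjoint, mul_def] using hA⟩
  rw [(spectrum.isClosed A).notMem_or_eventually_nhdsNE_notMem_iff]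
  refine ⟨fun h ↦ isClosed_range_of_mul_mul_eq_self _ (mul_cfc_inv_mul_cancel A h), fun hcl ↦ ?_⟩
  obtain ⟨c, hc, hbd⟩ := A.exists_pos_mul_norm_le_norm_apply_of_isClosed_range hcl
  filter_upwards [nhdsWithin_le_nhds (Metric.ball_mem_nhds 0 hc), self_mem_nhdsWithin]
    with z hzc hz0
  exact hA'.notMem_spectrum_of_norm_lt hbd hz0 (mem_ball_zero_iff.mp hzc)
end

section
/- Let E₁, E₂ be real normed linear spaces, U ⊆ E₁ open, and T : U → E₂ a map that is directionally differentiable at x₀ ∈ U with directional derivative DT(x₀, u). If for every u ∈ E₁ the map x ↦ DT(x, u) is finite 2-continuous at x₀ (i.e. for any h₁, h₂ ∈ E₁ the map (t₁,t₂) ↦ DT(x₀ + t₁h₁ + t₂h₂, u) is continuous at (0,0)), then the map u ↦ DT(x₀, u) is additive: DT(x₀, u+v) = DT(x₀, u) + DT(x₀, v) for all u, v ∈ E₁. -/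
open Filter Topology

/-- If `T` is directionally differentiable on an open set `U` with directional
derivative `DT`, and for every direction `u` the map `x ↦ DT x u` is finite
2-continuous at `x₀ ∈ U`, then `u ↦ DT x₀ u` is additive. -/
theorem statement4 {E₁ E₂ : Type*} [NormedAddCommGroup E₁] [NormedSpace ℝ E₁]
    [NormedAddCommGroup E₂] [NormedSpace ℝ E₂]
    (U : Set E₁) (hU : IsOpen U) (x₀ : E₁) (hx₀ : x₀ ∈ U)
    (T : E₁ → E₂) (DT : E₁ → E₁ → E₂)
    (hdiff : ∀ x ∈ U, ∀ u : E₁,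
      Filter.Tendsto (fun t : ℝ => t⁻¹ • (T (x + t • u) - T x))
        (nhdsWithin 0 {(0 : ℝ)}ᶜ) (nhds (DT x u)))
    (h2cont : ∀ u h₁ h₂ : E₁,
      ContinuousAt (fun p : ℝ × ℝ => DT (x₀ + p.1 • h₁ + p.2 • h₂) u) (0, 0)) :
    ∀ u v : E₁, DT x₀ (u + v) = DT x₀ u + DT x₀ v := by
  intro u v
  set L := DT x₀ v with hL
  set M := DT x₀ u with hM
  obtain ⟨r, hr, hball⟩ := Metric.isOpen_iff.1 hU x₀ hx₀
  have key : Tendsto (fun t : ℝ => t⁻¹ • (T (x₀ + t • u + t • v) - T (x₀ + t • u)))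
      (nhdsWithin 0 {(0 : ℝ)}ᶜ) (nhds L) := by
    rw [Metric.tendsto_nhdsWithin_nhds]
    intro ε hε
    have hcont := h2cont v u v
    have h00 : (fun p : ℝ × ℝ => DT (x₀ + p.1 • u + p.2 • v) v) (0, 0) = L := by
      simp [hL]
    rw [Metric.continuousAt_iff] at hcont
    obtain ⟨δ₁, hδ₁, hcont⟩ := hcont (ε / 2) (by positivity)
    set δ : ℝ := min δ₁ (r / (‖u‖ + ‖v‖ + 1)) with hδdef
    have hδpos : 0 < δ := lt_min hδ₁ (by positivity)
    refine ⟨δ, hδpos, ?_⟩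
    intro t ht htd
    rw [Real.dist_eq, sub_zero] at htd
    have htne : t ≠ 0 := ht
    -- membership in U
    have hmem : ∀ s : ℝ, |s| ≤ |t| → x₀ + t • u + s • v ∈ U := by
      intro s hs
      apply hball
      rw [Metric.mem_ball, dist_eq_norm]
      have : x₀ + t • u + s • v - x₀ = t • u + s • v := by abel
      rw [this]
      calc ‖t • u + s • v‖ ≤ ‖t • u‖ + ‖s • v‖ := norm_add_le _ _
        _ = |t| * ‖u‖ + |s| * ‖v‖ := by rw [norm_smul, norm_smul]; rfl
        _ ≤ |t| * ‖u‖ + |t| * ‖v‖ := by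
            gcongr
        _ = |t| * (‖u‖ + ‖v‖) := by ring
        _ ≤ |t| * (‖u‖ + ‖v‖ + 1) := by nlinarith [abs_nonneg t]
        _ < δ * (‖u‖ + ‖v‖ + 1) := by gcongr
        _ ≤ (r / (‖u‖ + ‖v‖ + 1)) * (‖u‖ + ‖v‖ + 1) := by
            gcongr
            exact min_le_right _ _
        _ = r := by field_simp
    -- derivative estimate on uIcc 0 t
    set g : ℝ → E₂ := fun s => T (x₀ + t • u + s • v) - s • L with hg
    have hderiv : ∀ s ∈ Set.uIcc (0:ℝ) t,
        HasDerivWithinAt g (DT (x₀ + t • u + s • v) v - L) (Set.uIcc (0:ℝ) t) s := by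
      intro s hs
      have hsabs : |s| ≤ |t| := by
        rcases Set.mem_uIcc.1 hs with ⟨h1, h2⟩ | ⟨h1, h2⟩
        · rw [abs_of_nonneg h1]
          exact h2.trans (le_abs_self t)
        · rw [abs_of_nonpos h2]
          exact (neg_le_neg h1).trans (neg_le_abs t)
      have hmem' := hmem s hsabs
      have hd := hdiff _ hmem' v
      have hT : HasDerivAt (fun s' : ℝ => T (x₀ + t • u + s' • v))
          (DT (x₀ + t • u + s • v) v) s := by
        rw [hasDerivAt_iff_tendsto_slope_zero]
        have hA : ∀ r' : ℝ, x₀ + t • u + (s + r') • v = x₀ + t • u + s • v + r' • v := by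
          intro r'; rw [add_smul]; abel
        simp only [hA]
        exact hd
      have hLs : HasDerivAt (fun s' : ℝ => s' • L) L s := by
        simpa using (hasDerivAt_id s).smul_const L
      exact ((hT.sub hLs)).hasDerivWithinAt
    have hbound : ∀ s ∈ Set.uIcc (0:ℝ) t, ‖DT (x₀ + t • u + s • v) v - L‖ ≤ ε / 2 := by
      intro s hs
      have hsabs : |s| ≤ |t| := by
        rcases Set.mem_uIcc.1 hs with ⟨h1, h2⟩ | ⟨h1, h2⟩
        · rw [abs_of_nonneg h1]
          exact h2.trans (le_abs_self t)
        · rw [abs_of_nonpos h2]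
          exact (neg_le_neg h1).trans (neg_le_abs t)
      have hdist : dist ((t, s) : ℝ × ℝ) (0, 0) < δ₁ := by
        rw [Prod.dist_eq]
        simp only [Real.dist_eq, sub_zero]
        exact max_lt (lt_of_lt_of_le htd (min_le_left _ _))
          (lt_of_le_of_lt hsabs (lt_of_lt_of_le htd (min_le_left _ _)))
      have := hcont hdist
      simp only [zero_smul, add_zero, dist_eq_norm] at this
      exact this.le
    have hMVT := (convex_uIcc (0:ℝ) t).norm_image_sub_le_of_norm_hasDerivWithin_le
      hderiv hbound Set.left_mem_uIcc Set.right_mem_uIcc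
    -- hMVT : ‖g t - g 0‖ ≤ ε/2 * ‖t - 0‖
    have hg0 : g 0 = T (x₀ + t • u) := by simp [hg]
    have hgt : g t = T (x₀ + t • u + t • v) - t • L := rfl
    rw [hg0, hgt, sub_zero] at hMVT
    rw [dist_eq_norm]
    have heq : t⁻¹ • (T (x₀ + t • u + t • v) - T (x₀ + t • u)) - L
        = t⁻¹ • (T (x₀ + t • u + t • v) - t • L - T (x₀ + t • u)) := by
      match_scalars <;> field_simp
    rw [heq, norm_smul, norm_inv, Real.norm_eq_abs]
    have habs : (0:ℝ) < |t| := abs_pos.2 htne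
    calc |t|⁻¹ * ‖T (x₀ + t • u + t • v) - t • L - T (x₀ + t • u)‖
        ≤ |t|⁻¹ * (ε / 2 * ‖t‖) := by gcongr
      _ = ε / 2 := by
          rw [Real.norm_eq_abs]
          field_simp
      _ < ε := by linarith
  have h2 : Tendsto (fun t : ℝ => t⁻¹ • (T (x₀ + t • u) - T x₀))
      (nhdsWithin 0 {(0 : ℝ)}ᶜ) (nhds M) := hdiff x₀ hx₀ u
  have h3 := key.add h2
  have h4 : Tendsto (fun t : ℝ => t⁻¹ • (T (x₀ + t • (u + v)) - T x₀))
      (nhdsWithin 0 {(0 : ℝ)}ᶜ) (nhds (L + M)) := by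
    apply h3.congr
    intro t
    rw [smul_add, ← smul_add]
    congr 1
    abel
  have huniq := tendsto_nhds_unique (hdiff x₀ hx₀ (u + v)) h4
  rw [huniq]
  abel
end

section
/- Let E₁, E₂ be real normed linear spaces, U ⊆ E₁ open, and T : U → E₂ continuously directionally differentiable on U (i.e. the directional derivative DT(x,u) exists for all x ∈ U, u ∈ E₁ and the map (x,u) ↦ DT(x,u) is continuous on U × E₁). Then T is strictly Gâteaux differentiable at every x₀ ∈ U: for every v ∈ E₁, ‖T(x+tv) − T(x) − t·T'(x₀)v‖ = o(|t|) as x → x₀ and t → 0. -/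
/-!
On the line `s ↦ x + s • v` the directional derivative `DT (x + s • v) v` is an honest
derivative, so the mean value inequality puts every difference quotient of `T` along `v` within
the oscillation of `y ↦ DT y v` over the segment `[x, x + t • v]` of `DT x₀ v`. For `x` near `x₀`
and `t` near `0` that segment lies in a small ball around `x₀`, where this oscillation is small by
continuity of `DT`.
-/

open Filter Set Topology

section

variable {E F : Type*} [NormedAddCommGroup E] [NormedSpace ℝ E]
  [NormedAddCommGroup F] [NormedSpace ℝ F]

theorem norm_slope_sub_le_of_hasDerivAt {g g' : ℝ → F} {c : F} {C t : ℝ} (ht : t ≠ 0)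
    (hg : ∀ s ∈ uIcc 0 t, HasDerivAt g (g' s) s) (hbound : ∀ s ∈ uIcc 0 t, ‖g' s - c‖ ≤ C) :
    ‖slope g 0 t - c‖ ≤ C := by
  have hmvt : ‖(g t - t • c) - (g 0 - (0 : ℝ) • c)‖ ≤ C * ‖t - 0‖ :=
    (convex_uIcc 0 t).norm_image_sub_le_of_norm_hasDerivWithin_le
      (f := fun s ↦ g s - s • c)
      (fun s hs ↦ ((hg s hs).sub ((hasDerivAt_id s).smul_const c)).hasDerivWithinAt)
      (by simpa using hbound) left_mem_uIcc right_mem_uIcc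
  have hslope : slope g 0 t - c = t⁻¹ • ((g t - t • c) - (g 0 - (0 : ℝ) • c)) := by
    simp only [slope_def_module, sub_zero, zero_smul, smul_sub, smul_smul, inv_mul_cancel₀ ht,
      one_smul]
    abel
  rw [hslope, norm_smul, norm_inv, ← div_eq_inv_mul, div_le_iff₀ (norm_pos_iff.mpr ht)]
  simpa using hmvt

theorem hasDerivAt_comp_add_smul_of_tendsto {f : E → F} {x v : E} {d : F} {s : ℝ}
    (h : Tendsto (fun t : ℝ ↦ t⁻¹ • (f (x + s • v + t • v) - f (x + s • v))) (𝓝[≠] 0) (𝓝 d)) :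
    HasDerivAt (fun s : ℝ ↦ f (x + s • v)) d s := by
  rw [hasDerivAt_iff_tendsto_slope_zero]
  simpa only [add_smul, add_assoc] using h

end

/-- If `T` is continuously directionally differentiable on an open set `U` (the
directional derivative `DT x u` exists for all `x ∈ U`, `u ∈ E₁` and `(x,u) ↦ DT x u`
is continuous on `U × E₁`), then `T` is strictly Gâteaux differentiable at every
`x₀ ∈ U`: for every direction `v`, `‖T(x+tv) − T(x) − t·DT x₀ v‖ = o(|t|)` as
`x → x₀` and `t → 0`. -/
theorem statement5 {E₁ E₂ : Type*} [NormedAddCommGroup E₁] [NormedSpace ℝ E₁]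
    [NormedAddCommGroup E₂] [NormedSpace ℝ E₂]
    (U : Set E₁) (hU : IsOpen U)
    (T : E₁ → E₂) (DT : E₁ → E₁ → E₂)
    (hdiff : ∀ x ∈ U, ∀ u : E₁,
      Filter.Tendsto (fun t : ℝ => t⁻¹ • (T (x + t • u) - T x))
        (nhdsWithin 0 {(0 : ℝ)}ᶜ) (nhds (DT x u)))
    (hcont : ContinuousOn (fun p : E₁ × E₁ => DT p.1 p.2) (U ×ˢ Set.univ)) :
    ∀ x₀ ∈ U, ∀ v : E₁, ∀ ε > (0 : ℝ), ∃ δ > (0 : ℝ), ∀ x : E₁, ∀ t : ℝ,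
      ‖x - x₀‖ < δ → t ≠ 0 → |t| < δ →
      ‖t⁻¹ • (T (x + t • v) - T x) - DT x₀ v‖ < ε := by
  intro x₀ hx₀ v ε hε
  have hDTv : ContinuousAt (fun y ↦ DT y v) x₀ :=
    (hcont.continuousAt ((hU.prod isOpen_univ).mem_nhds ⟨hx₀, trivial⟩)).comp
      (f := fun y ↦ (y, v)) (by fun_prop)
  have hW : {y | y ∈ U ∧ dist (DT y v) (DT x₀ v) < ε / 2} ∈ 𝓝 x₀ :=
    inter_mem (hU.mem_nhds hx₀) (hDTv.preimage_mem_nhds (Metric.ball_mem_nhds _ (by positivity)))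
  have hline : ContinuousAt (fun p : E₁ × ℝ ↦ p.1 + p.2 • v) (x₀, 0) := by fun_prop
  obtain ⟨δ, hδ, hball⟩ := Metric.mem_nhds_iff.mp
    (hline.preimage_mem_nhds (by simpa using hW))
  refine ⟨δ, hδ, fun x t hx ht htδ ↦ ?_⟩
  have hsegment : ∀ s ∈ uIcc 0 t, x + s • v ∈ U ∧ dist (DT (x + s • v) v) (DT x₀ v) < ε / 2 := by
    intro s hs
    have hs_abs : |s| ≤ |t| := by simpa using abs_sub_left_of_mem_uIcc hs
    have hmem : (x, s) ∈ Metric.ball (x₀, (0 : ℝ)) δ := by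
      rw [← ball_prod_same]
      exact ⟨by rwa [mem_ball_iff_norm], by rw [Metric.mem_ball, Real.dist_0_eq_abs]; linarith⟩
    exact hball hmem
  have hslope := norm_slope_sub_le_of_hasDerivAt (c := DT x₀ v) ht
    (fun s hs ↦ hasDerivAt_comp_add_smul_of_tendsto (hdiff _ (hsegment s hs).1 v))
    (fun s hs ↦ by rw [← dist_eq_norm]; exact (hsegment s hs).2.le)
  rw [slope_def_module] at hslope
  simp only [sub_zero, zero_smul, add_zero] at hslope
  linarith
end

section
/- Let E₁, E₂ be real normed spaces, U ⊆ E₁ open, and T : U → E₂ Gâteaux differentiable near x₀ ∈ U and strictly Gâteaux differentiable at x₀. Then T' is strongly continuous at x₀: for every v ∈ E₁, ‖T'(x)v − T'(x₀)v‖ → 0 as ‖x − x₀‖ → 0. -/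
/-- If `T` is Gâteaux differentiable on an open set `U ∋ x₀` with derivative
`T' x ∈ L(E₁,E₂)`, and `T` is strictly Gâteaux differentiable at `x₀`, then `T'` is
strongly continuous at `x₀`: for every `v`, `T' x v → T' x₀ v` as `x → x₀` in `U`. -/
theorem statement6 {E₁ E₂ : Type*} [NormedAddCommGroup E₁] [NormedSpace ℝ E₁]
    [NormedAddCommGroup E₂] [NormedSpace ℝ E₂]
    (U : Set E₁) (hU : IsOpen U) (x₀ : E₁) (hx₀ : x₀ ∈ U)
    (T : E₁ → E₂) (T' : E₁ → E₁ →L[ℝ] E₂)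
    (hdiff : ∀ x ∈ U, ∀ v : E₁,
      Filter.Tendsto (fun t : ℝ => t⁻¹ • (T (x + t • v) - T x))
        (nhdsWithin 0 {(0 : ℝ)}ᶜ) (nhds (T' x v)))
    (hstrict : ∀ v : E₁, ∀ ε > (0 : ℝ), ∃ δ > (0 : ℝ), ∀ x : E₁, ∀ t : ℝ,
      ‖x - x₀‖ < δ → t ≠ 0 → |t| < δ →
      ‖t⁻¹ • (T (x + t • v) - T x) - T' x₀ v‖ < ε) :
    ∀ v : E₁,
      Filter.Tendsto (fun x => T' x v) (nhdsWithin x₀ U) (nhds (T' x₀ v)) := by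
  intro v
  rw [Metric.tendsto_nhdsWithin_nhds]
  intro ε hε
  obtain ⟨δ, hδ, hδ'⟩ := hstrict v (ε / 2) (by linarith)
  refine ⟨δ, hδ, fun {x} hxU hx => ?_⟩
  rw [dist_eq_norm] at hx ⊢
  have hlim : Filter.Tendsto (fun t : ℝ => ‖t⁻¹ • (T (x + t • v) - T x) - T' x₀ v‖)
      (nhdsWithin 0 {(0 : ℝ)}ᶜ) (nhds ‖T' x v - T' x₀ v‖) :=
    ((hdiff x hxU v).sub tendsto_const_nhds).norm
  have hev : ∀ᶠ t in nhdsWithin (0 : ℝ) {(0 : ℝ)}ᶜ,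
      ‖t⁻¹ • (T (x + t • v) - T x) - T' x₀ v‖ ≤ ε / 2 := by
    filter_upwards [self_mem_nhdsWithin,
      eventually_nhdsWithin_of_eventually_nhds
        (Metric.eventually_nhds_iff.mpr ⟨δ, hδ, fun {t} ht => ht⟩)] with t ht ht'
    simp only [Set.mem_compl_iff, Set.mem_singleton_iff] at ht
    rw [Real.dist_eq, sub_zero] at ht'
    exact (hδ' x t hx ht ht').le
  have := le_of_tendsto hlim hev
  linarith
end

section
/- Let H be a Hilbert space with orthogonal decomposition H = H⁰ ⊕ H⁺ ⊕ H⁻ where H⁰ and H⁻ are finite-dimensional, and let B(θ) ∈ L_s(H) be a bounded self-adjoint operator with Ker B(θ) = H⁰, (B(θ)u,u) ≥ 2a₀‖u‖² for all u ∈ H⁺, and (B(θ)u,u) ≤ −2a₀‖u‖² for all u ∈ H⁻, for some a₀ > 0. Suppose B : V ∩ X → L_s(H) (X dense in H, V a neighborhood of θ) decomposes as B(x) = P(x) + Q(x) with: for any sequence x_n ∈ V∩X, ‖x_n‖→0, there exist C₀>0 and n₀ with (P(x_n)u,u) ≥ C₀‖u‖² for all u ∈ H and n ≥ n₀; P(x_n)u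 → P(θ)u for all u ∈ H; each Q(x) compact, and Q continuous at θ in L(H)-norm along ‖·‖_H. Then there exist a neighborhood U ⊆ V of θ in H and a₁ ∈ (0, 2a₀] such that (B(x)u, u) ≥ a₁‖u‖² for all x ∈ U ∩ X and all u ∈ H⁺. -/
/-!
Argue by contradiction: otherwise there are `xₙ → 0` in `V ∩ X` and unit vectors `uₙ ∈ H⁺` with
`⟪B(xₙ) uₙ, uₙ⟫ → 0`. A subsequence converges weakly to some `w` with `‖w‖ ≤ 1`, and `w ∈ H⁺`
because `H⁺ = (H⁰ ⊔ H⁻)ᗮ` is weakly closed. Writing `uₙ = (uₙ - w) + w`, the coercive part gives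
`⟪P(xₙ)(uₙ - w), uₙ - w⟫ ≥ C₀ ‖uₙ - w‖² → C₀ (1 - ‖w‖²)`, the compact part
`⟪Q(xₙ)(uₙ - w), uₙ - w⟫ → 0` (a compact operator maps weakly null sequences to null ones), and the
cross terms tend to `⟪B(0) w, w⟫ ≥ 2 a₀ ‖w‖²`. Hence `C₀ (1 - ‖w‖²) + 2 a₀ ‖w‖² ≤ 0`, which is
impossible for `‖w‖ ≤ 1`.
-/

open scoped RealInnerProductSpace

open Filter Topology

theorem Submodule.eq_orthogonal_of_sup_eq_top {𝕜 E : Type*} [RCLike 𝕜] [NormedAddCommGroup E]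
    [InnerProductSpace 𝕜 E] {K L : Submodule 𝕜 E} (h : K ⊔ L = ⊤)
    (hL : L ≤ Kᗮ) : L = Kᗮ :=
  eq_of_le_of_inf_le_of_sup_le (z := K) hL (by simp [inf_comm, K.inf_orthogonal_eq_bot])
    (by rw [sup_comm L, h]; exact le_top)

section WeakConvergence

variable {H : Type*} [NormedAddCommGroup H] [InnerProductSpace ℝ H]

def WeakTendsto (y : ℕ → H) (w : H) : Prop :=
  ∀ v, Tendsto (fun n => ⟪v, y n⟫) atTop (𝓝 ⟪v, w⟫)

namespace WeakTendsto

variable {y : ℕ → H} {w : H}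

theorem sub_const (hw : WeakTendsto y w) (c : H) : WeakTendsto (fun n => y n - c) (w - c) :=
  fun v => by simpa only [inner_sub_right] using (hw v).sub_const ⟪v, c⟫

theorem norm_le {M : ℝ} (hw : WeakTendsto y w) (hy : ∀ n, ‖y n‖ ≤ M) : ‖w‖ ≤ M := by
  have hM : 0 ≤ M := (norm_nonneg _).trans (hy 0)
  have hww : ‖w‖ ^ 2 ≤ ‖w‖ * M := by
    rw [← real_inner_self_eq_norm_sq]
    exact le_of_tendsto' (hw w) fun n =>
      (real_inner_le_norm w (y n)).trans (by gcongr; exact hy n)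
  nlinarith [norm_nonneg w]

theorem mem_orthogonal {K : Submodule ℝ H} (hw : WeakTendsto y w) (hy : ∀ n, y n ∈ Kᗮ) :
    w ∈ Kᗮ := fun s hs =>
  tendsto_nhds_unique (hw s) (by simpa only [(hy _) s hs] using tendsto_const_nhds)

theorem tendsto_inner {M : ℝ} {a : ℕ → H} {b : H} (hw : WeakTendsto y w) (hy : ∀ n, ‖y n‖ ≤ M)
    (ha : Tendsto a atTop (𝓝 b)) : Tendsto (fun n => ⟪a n, y n⟫) atTop (𝓝 ⟪b, w⟫) := by
  have hsmall : Tendsto (fun n => ⟪a n - b, y n⟫) atTop (𝓝 0) := by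
    refine squeeze_zero_norm (fun n => (norm_inner_le_norm _ _).trans
      (mul_le_mul_of_nonneg_left (hy n) (norm_nonneg _))) ?_
    simpa using (tendsto_iff_norm_sub_tendsto_zero.1 ha).mul_const M
  simpa [inner_sub_left] using hsmall.add (hw b)

theorem tendsto_norm_sub_sq {r : ℝ} (hw : WeakTendsto y w)
    (hy : Tendsto (fun n => ‖y n‖) atTop (𝓝 r)) :
    Tendsto (fun n => ‖y n - w‖ ^ 2) atTop (𝓝 (r ^ 2 - ‖w‖ ^ 2)) := by
  have h := ((hy.pow 2).sub ((hw w).const_mul 2)).add_const (‖w‖ ^ 2)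
  simp_rw [norm_sub_sq_real, real_inner_comm w]
  convert h using 2
  rw [real_inner_self_eq_norm_sq]; ring

end WeakTendsto

theorem exists_strictMono_weakTendsto [CompleteSpace H] {u : ℕ → H} {M : ℝ}
    (hu : ∀ n, ‖u n‖ ≤ M) : ∃ φ : ℕ → ℕ, StrictMono φ ∧ ∃ w, WeakTendsto (u ∘ φ) w := by
  set K := (Submodule.span ℝ (Set.range u)).topologicalClosure
  have huK (n : ℕ) : u n ∈ K := Submodule.le_topologicalClosure _ (Submodule.subset_span ⟨n, rfl⟩)
  have : CompleteSpace K := (Submodule.isClosed_topologicalClosure _).completeSpace_coe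
  have : TopologicalSpace.SeparableSpace K := by
    have : TopologicalSpace.IsSeparable (K : Set H) := by
      rw [Submodule.topologicalClosure_coe, TopologicalSpace.isSeparable_closure]
      exact (Set.countable_range u).isSeparable.span
    exact this.separableSpace
  -- Banach–Alaoglu in the separable space `K`, then the Riesz representative of the limit.
  let f (n : ℕ) : StrongDual ℝ K := innerSL ℝ (⟨u n, huK n⟩ : K)
  obtain ⟨g, -, φ, hφ, hg⟩ := WeakDual.isSeqCompact_closedBall ℝ K 0 M
    (x := fun n => StrongDual.toWeakDual (f n)) fun n => by
      simpa [f, innerSL_apply_norm] using hu n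
  refine ⟨φ, hφ, (InnerProductSpace.toDual ℝ K).symm (WeakDual.toStrongDual g), fun v => ?_⟩
  set p := K.orthogonalProjectionOnto v
  have hp : Tendsto (fun n => f (φ n) p) atTop (𝓝 (g p)) :=
    ((WeakDual.eval_continuous p).tendsto g).comp hg
  have inner_eq_proj (k : K) : ⟪v, (k : H)⟫ = ⟪k, p⟫ := by
    rw [real_inner_comm, Submodule.inner_orthogonalProjectionOnto_eq_of_mem_left]
  convert hp using 2 with n
  · exact inner_eq_proj ⟨u (φ n), huK _⟩
  · rw [inner_eq_proj, InnerProductSpace.toDual_symm_apply]; rfl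

theorem IsCompactOperator.tendsto_zero_of_weakTendsto_zero [CompleteSpace H] {T : H →L[ℝ] H}
    (hT : IsCompactOperator T) {y : ℕ → H} {M : ℝ} (hy : ∀ n, ‖y n‖ ≤ M)
    (hw : WeakTendsto y 0) : Tendsto (fun n => T (y n)) atTop (𝓝 0) := by
  obtain ⟨C, hC, hTC⟩ := hT.image_closedBall_subset_compact (𝕜₁ := ℝ) M
  have hmem (n : ℕ) : T (y n) ∈ C := hTC ⟨y n, by simpa using hy n, rfl⟩
  refine tendsto_of_subseq_tendsto fun ψ hψ => ?_
  obtain ⟨q, -, χ, hχ, hq⟩ := hC.isSeqCompact fun n => hmem (ψ n)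
  -- `⟪v, T yₙ⟫ = ⟪T† v, yₙ⟫ → 0`, so every subsequential limit of `T yₙ` vanishes.
  have hq0 : q = 0 := by
    refine (inner_self_eq_zero (𝕜 := ℝ)).1
      (tendsto_nhds_unique (tendsto_const_nhds.inner hq) ?_)
    simpa [ContinuousLinearMap.adjoint_inner_left, Function.comp_def] using
      (hw (T.adjoint q)).comp (hψ.comp hχ.tendsto_atTop)
  exact ⟨χ, hq0 ▸ hq⟩

theorem tendsto_inner_apply_self_of_weakTendsto_zero [CompleteSpace H] {Q : ℕ → H →L[ℝ] H}
    {Q₀ : H →L[ℝ] H} (hQ : Tendsto Q atTop (𝓝 Q₀)) (hQ₀ : IsCompactOperator Q₀) {y : ℕ → H}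
    {M : ℝ} (hy : ∀ n, ‖y n‖ ≤ M) (hw : WeakTendsto y 0) :
    Tendsto (fun n => ⟪Q n (y n), y n⟫) atTop (𝓝 0) := by
  have hQy : Tendsto (fun n => Q n (y n)) atTop (𝓝 0) := by
    have hsmall : Tendsto (fun n => (Q n - Q₀) (y n)) atTop (𝓝 0) := by
      refine squeeze_zero_norm (fun n => ((Q n - Q₀).le_opNorm _).trans
        (mul_le_mul_of_nonneg_left (hy n) (norm_nonneg _))) ?_
      simpa using (tendsto_iff_norm_sub_tendsto_zero.1 hQ).mul_const M
    simpa using hsmall.add (hQ₀.tendsto_zero_of_weakTendsto_zero hy hw)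
  simpa using hw.tendsto_inner hy hQy

theorem LinearMap.IsSymmetric.inner_map_self_eq_sub {T : H →ₗ[ℝ] H} (hT : T.IsSymmetric)
    (y w : H) : ⟪T y, y⟫ = ⟪T (y - w), y - w⟫ + 2 * ⟪T w, y⟫ - ⟪T w, w⟫ := by
  simp only [map_sub, inner_sub_left, inner_sub_right, hT y w, real_inner_comm (T w) y]
  ring

theorem mul_norm_sq_le_inner_of_norm_eq_one {T : H →ₗ[ℝ] H} {K : Submodule ℝ H} {a : ℝ}
    (h : ∀ u ∈ K, ‖u‖ = 1 → a ≤ ⟪T u, u⟫) {u : H} (hu : u ∈ K) : a * ‖u‖ ^ 2 ≤ ⟪T u, u⟫ := by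
  rcases eq_or_ne u 0 with rfl | hu0
  · simp
  have hunit := h _ (K.smul_mem ‖u‖⁻¹ hu) (norm_smul_inv_norm hu0)
  rw [map_smul, real_inner_smul_left, real_inner_smul_right] at hunit
  have hnorm : ‖u‖ ≠ 0 := norm_ne_zero_iff.2 hu0
  calc a * ‖u‖ ^ 2 ≤ ‖u‖⁻¹ * (‖u‖⁻¹ * ⟪T u, u⟫) * ‖u‖ ^ 2 := by gcongr
    _ = ⟪T u, u⟫ := by field_simp

section Perturbation

variable [CompleteSpace H] {B P Q : ℕ → H →L[ℝ] H} {P₀ Q₀ : H →L[ℝ] H} {C₀ : ℝ}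

theorem add_inner_le_zero_of_weakTendsto (hB : ∀ n, IsSelfAdjoint (B n))
    (hBPQ : ∀ n, B n = P n + Q n) (hPpos : ∀ᶠ n in atTop, ∀ v, C₀ * ‖v‖ ^ 2 ≤ ⟪P n v, v⟫)
    (hP : ∀ v, Tendsto (fun n => P n v) atTop (𝓝 (P₀ v))) (hQ : Tendsto Q atTop (𝓝 Q₀))
    (hQ₀ : IsCompactOperator Q₀) {y : ℕ → H} {w : H} (hy : ∀ n, ‖y n‖ = 1)
    (hw : WeakTendsto y w) (hsmall : ∀ c > 0, ∀ᶠ n in atTop, ⟪B n (y n), y n⟫ < c) :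
    C₀ * (1 - ‖w‖ ^ 2) + ⟪(P₀ + Q₀) w, w⟫ ≤ 0 := by
  have hyw : WeakTendsto (fun n => y n - w) 0 := by simpa using hw.sub_const w
  have hbound (n : ℕ) : ‖y n - w‖ ≤ 1 + ‖w‖ := (norm_sub_le _ _).trans_eq (by rw [hy n])
  have hBw : Tendsto (fun n => B n w) atTop (𝓝 ((P₀ + Q₀) w)) := by
    have hQw : Tendsto (fun n => Q n w) atTop (𝓝 (Q₀ w)) :=
      ((ContinuousLinearMap.apply ℝ H w).continuous.tendsto Q₀).comp hQ
    simpa only [hBPQ, add_apply] using (hP w).add hQw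
  set L := fun n => C₀ * ‖y n - w‖ ^ 2 + ⟪Q n (y n - w), y n - w⟫
    + (2 * ⟪B n w, y n⟫ - ⟪B n w, w⟫)
  have hL : Tendsto L atTop (𝓝 (C₀ * (1 - ‖w‖ ^ 2) + ⟪(P₀ + Q₀) w, w⟫)) := by
    have := (((hw.tendsto_norm_sub_sq (r := 1) (by simp [hy])).const_mul C₀).add
      (tendsto_inner_apply_self_of_weakTendsto_zero hQ hQ₀ hbound hyw)).add
      (((hw.tendsto_inner (fun n => (hy n).le) hBw).const_mul 2).sub
        (hBw.inner (tendsto_const_nhds (x := w))))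
    convert this using 2
    ring
  have hLle : ∀ᶠ n in atTop, L n ≤ ⟪B n (y n), y n⟫ := hPpos.mono fun n hn => by
    have hexp := (hB n).isSymmetric.inner_map_self_eq_sub (y n) w
    simp only [ContinuousLinearMap.coe_coe] at hexp
    have hsplit : ⟪B n (y n - w), y n - w⟫
        = ⟪P n (y n - w), y n - w⟫ + ⟪Q n (y n - w), y n - w⟫ := by
      rw [hBPQ n, add_apply, inner_add_left]
    linarith [hn (y n - w)]
  refine le_of_forall_pos_le_add fun c hc => le_of_tendsto hL ?_
  filter_upwards [hLle, hsmall c hc] with n hn hnc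
  linarith

theorem exists_pos_frequently_le_inner {K : Submodule ℝ H} {a₀ : ℝ} (ha₀ : 0 < a₀)
    (hpos : ∀ v ∈ Kᗮ, a₀ * ‖v‖ ^ 2 ≤ ⟪(P₀ + Q₀) v, v⟫) (hC₀ : 0 < C₀)
    (hB : ∀ n, IsSelfAdjoint (B n)) (hBPQ : ∀ n, B n = P n + Q n)
    (hPpos : ∀ᶠ n in atTop, ∀ v, C₀ * ‖v‖ ^ 2 ≤ ⟪P n v, v⟫)
    (hP : ∀ v, Tendsto (fun n => P n v) atTop (𝓝 (P₀ v))) (hQ : Tendsto Q atTop (𝓝 Q₀))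
    (hQ₀ : IsCompactOperator Q₀) {u : ℕ → H} (hu : ∀ n, u n ∈ Kᗮ) (hu1 : ∀ n, ‖u n‖ = 1) :
    ∃ c > 0, ∃ᶠ n in atTop, c ≤ ⟪B n (u n), u n⟫ := by
  by_contra! hsmall
  obtain ⟨φ, hφ, w, hw⟩ := exists_strictMono_weakTendsto fun n => (hu1 n).le
  have hφ' := hφ.tendsto_atTop
  have hlim := add_inner_le_zero_of_weakTendsto (B := B ∘ φ) (fun n => hB _) (fun n => hBPQ _)
    (hφ'.eventually hPpos) (fun v => (hP v).comp hφ') (hQ.comp hφ') hQ₀ (fun n => hu1 _) hw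
    fun c hc => hφ'.eventually (hsmall c hc)
  have hwK : w ∈ Kᗮ := hw.mem_orthogonal fun n => hu _
  have hw1 : ‖w‖ ^ 2 ≤ 1 := pow_le_one₀ (norm_nonneg w) (hw.norm_le fun n => (hu1 _).le)
  -- `(C₀ + a₀) (C₀ (1 - s) + a₀ s) ≥ C₀ a₀` for `s = ‖w‖² ∈ [0, 1]`
  nlinarith [hpos w hwK, mul_nonneg (sq_nonneg C₀) (sub_nonneg.2 hw1),
    mul_nonneg (sq_nonneg a₀) (sq_nonneg ‖w‖), mul_pos hC₀ ha₀, add_pos hC₀ ha₀]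

end Perturbation

end WeakConvergence

theorem statement8_general {H : Type*} [NormedAddCommGroup H] [InnerProductSpace ℝ H]
    [CompleteSpace H]
    (H0 Hp Hm : Submodule ℝ H)
    (horth1 : Hp ≤ H0ᗮ) (horth3 : Hp ≤ Hmᗮ)
    (hspan : H0 ⊔ Hp ⊔ Hm = ⊤)
    (X : Submodule ℝ H)
    (V : Set H) (hV : V ∈ nhds (0 : H))
    (B P Q : H → H →L[ℝ] H)
    (hsa : ∀ x, IsSelfAdjoint (B x))
    (a₀ : ℝ) (ha₀ : 0 < a₀)
    (hpos : ∀ u ∈ Hp, 2 * a₀ * ‖u‖ ^ 2 ≤ ⟪B 0 u, u⟫)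
    (hdec : ∀ x ∈ V ∩ X, B x = P x + Q x)
    (hPseq : ∀ x : ℕ → H, (∀ n, x n ∈ V ∩ X) →
      Filter.Tendsto (fun n => ‖x n‖) Filter.atTop (nhds 0) →
      ∃ C₀ > (0 : ℝ), ∃ n₀ : ℕ, ∀ n ≥ n₀, ∀ u : H, C₀ * ‖u‖ ^ 2 ≤ ⟪P (x n) u, u⟫)
    (hPconv : ∀ x : ℕ → H, (∀ n, x n ∈ V ∩ X) →
      Filter.Tendsto (fun n => ‖x n‖) Filter.atTop (nhds 0) →
      ∀ u : H, Filter.Tendsto (fun n => P (x n) u) Filter.atTop (nhds (P 0 u)))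
    (hQcomp : ∀ x ∈ V ∩ X, IsCompactOperator (Q x))
    (hQcont : ∀ ε > (0 : ℝ), ∃ δ > (0 : ℝ), ∀ x ∈ V ∩ X, ‖x‖ < δ →
      ‖Q x - Q 0‖ < ε) :
    ∃ U ∈ nhds (0 : H), U ⊆ V ∧ ∃ a₁ : ℝ, 0 < a₁ ∧ a₁ ≤ 2 * a₀ ∧
      ∀ x ∈ U ∩ X, ∀ u ∈ Hp, a₁ * ‖u‖ ^ 2 ≤ ⟪B x u, u⟫ := by
  have h0 : (0 : H) ∈ V ∩ X := ⟨mem_of_mem_nhds hV, X.zero_mem⟩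
  have hHp : Hp = (H0 ⊔ Hm)ᗮ := Submodule.eq_orthogonal_of_sup_eq_top
    (by rw [← hspan]; ac_rfl) (Submodule.inf_orthogonal H0 Hm ▸ le_inf horth1 horth3)
  have hQ : Tendsto Q (𝓝[V ∩ X] 0) (𝓝 (Q 0)) :=
    Metric.tendsto_nhdsWithin_nhds.2 fun ε hε => (hQcont ε hε).imp fun δ ⟨hδ, h⟩ =>
      ⟨hδ, fun x hx hxδ => by simpa [dist_eq_norm] using h _ hx (by simpa using hxδ)⟩
  obtain ⟨δ, hδ, a, ha, hunit⟩ : ∃ δ > 0, ∃ a > 0, ∀ x ∈ V ∩ X, ‖x‖ < δ →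
      ∀ u ∈ Hp, ‖u‖ = 1 → a ≤ ⟪B x u, u⟫ := by
    by_contra! h
    choose x hxS hxδ u hu hu1 hlt using fun n : ℕ =>
      h (1 / (n + 1)) Nat.one_div_pos_of_nat (1 / (n + 1)) Nat.one_div_pos_of_nat
    have hx : Tendsto (fun n => ‖x n‖) atTop (𝓝 0) :=
      squeeze_zero (fun _ => norm_nonneg _) (fun n => (hxδ n).le)
        tendsto_one_div_add_atTop_nhds_zero_nat
    obtain ⟨C₀, hC₀, n₀, hP⟩ := hPseq x hxS hx
    obtain ⟨c, hc, hfreq⟩ := exists_pos_frequently_le_inner (K := H0 ⊔ Hm) (a₀ := 2 * a₀)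
      (by positivity) (fun v hv => by rw [← hdec 0 h0]; exact hpos v (hHp ▸ hv)) hC₀
      (fun n => hsa _) (fun n => hdec _ (hxS n)) (eventually_atTop.2 ⟨n₀, hP⟩) (hPconv x hxS hx)
      (hQ.comp (tendsto_nhdsWithin_iff.2 ⟨tendsto_zero_iff_norm_tendsto_zero.2 hx,
        Eventually.of_forall hxS⟩)) (hQcomp 0 h0) (fun n => hHp ▸ hu n) hu1
    obtain ⟨n, hcn, hnc⟩ := (hfreq.and_eventually
      (tendsto_one_div_add_atTop_nhds_zero_nat.eventually (gt_mem_nhds hc))).exists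
    linarith [hlt n]
  obtain ⟨r, hr, hrV⟩ := Metric.mem_nhds_iff.1 hV
  refine ⟨Metric.ball 0 (min δ r), Metric.ball_mem_nhds _ (lt_min hδ hr),
    (Metric.ball_subset_ball (min_le_right _ _)).trans hrV, min a (2 * a₀), by positivity,
    min_le_right _ _, fun x ⟨hxU, hxX⟩ u hu => ?_⟩
  have hxδ : ‖x‖ < δ := by simpa using (Metric.ball_subset_ball (min_le_left _ _) hxU)
  calc min a (2 * a₀) * ‖u‖ ^ 2 ≤ a * ‖u‖ ^ 2 := by gcongr; exact min_le_left _ _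
    _ ≤ ⟪B x u, u⟫ := mul_norm_sq_le_inner_of_norm_eq_one
        (hunit x ⟨hrV (Metric.ball_subset_ball (min_le_right _ _) hxU), hxX⟩ hxδ) hu

/-- Uniform positive-definiteness of `B(x)` on `H⁺` for `x` near the origin
(Lemma 3.4(i)): under the decomposition `B(x) = P(x) + Q(x)` with `P` uniformly
positive along sequences tending to `0`, `P` strongly convergent to `P(0)`,
`Q(x)` compact and `Q` norm-continuous at `0` along `X`, and the spectral-gap bounds
for `B(0)`, there are a neighborhood `U ⊆ V` of `0` and `a₁ ∈ (0, 2a₀]` with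
`(B(x)u, u) ≥ a₁‖u‖²` for all `x ∈ U ∩ X` and `u ∈ H⁺`. -/
theorem statement8 {H : Type*} [NormedAddCommGroup H] [InnerProductSpace ℝ H]
    [CompleteSpace H]
    (H0 Hp Hm : Submodule ℝ H)
    (hfin0 : FiniteDimensional ℝ H0) (hfinm : FiniteDimensional ℝ Hm)
    (horth1 : Hp ≤ H0ᗮ) (horth2 : Hm ≤ H0ᗮ) (horth3 : Hp ≤ Hmᗮ)
    (hspan : H0 ⊔ Hp ⊔ Hm = ⊤)
    (X : Submodule ℝ H) (hX : Dense (X : Set H))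
    (V : Set H) (hV : V ∈ nhds (0 : H))
    (B P Q : H → H →L[ℝ] H)
    (hsa : ∀ x, IsSelfAdjoint (B x))
    (hker : LinearMap.ker (B 0 : H →ₗ[ℝ] H) = H0)
    (a₀ : ℝ) (ha₀ : 0 < a₀)
    (hpos : ∀ u ∈ Hp, 2 * a₀ * ‖u‖ ^ 2 ≤ ⟪B 0 u, u⟫)
    (hneg : ∀ u ∈ Hm, ⟪B 0 u, u⟫ ≤ -(2 * a₀) * ‖u‖ ^ 2)
    (hdec : ∀ x ∈ V ∩ X, B x = P x + Q x)
    (hPseq : ∀ x : ℕ → H, (∀ n, x n ∈ V ∩ X) →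
      Filter.Tendsto (fun n => ‖x n‖) Filter.atTop (nhds 0) →
      ∃ C₀ > (0 : ℝ), ∃ n₀ : ℕ, ∀ n ≥ n₀, ∀ u : H, C₀ * ‖u‖ ^ 2 ≤ ⟪P (x n) u, u⟫)
    (hPconv : ∀ x : ℕ → H, (∀ n, x n ∈ V ∩ X) →
      Filter.Tendsto (fun n => ‖x n‖) Filter.atTop (nhds 0) →
      ∀ u : H, Filter.Tendsto (fun n => P (x n) u) Filter.atTop (nhds (P 0 u)))
    (hQcomp : ∀ x ∈ V ∩ X, IsCompactOperator (Q x))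
    (hQcont : ∀ ε > (0 : ℝ), ∃ δ > (0 : ℝ), ∀ x ∈ V ∩ X, ‖x‖ < δ →
      ‖Q x - Q 0‖ < ε) :
    ∃ U ∈ nhds (0 : H), U ⊆ V ∧ ∃ a₁ : ℝ, 0 < a₁ ∧ a₁ ≤ 2 * a₀ ∧
      ∀ x ∈ U ∩ X, ∀ u ∈ Hp, a₁ * ‖u‖ ^ 2 ≤ ⟪B x u, u⟫ :=
  statement8_general H0 Hp Hm horth1 horth3 hspan X V hV B P Q hsa a₀ ha₀ hpos hdec hPseq hPconv
    hQcomp hQcont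
end

section
/- Let H be a Hilbert space, X ⊂ H a Banach space continuously and densely embedded with ‖x‖ ≤ ‖x‖_X, and H = H⁰ ⊕ H^± the orthogonal decomposition with H⁰ = Ker B(θ) finite-dimensional, H⁰ ⊂ X, and X^± = X ∩ H^±. Suppose B(θ) ∈ L_s(H) satisfies B(θ)(X) ⊆ X, B(θ)|_{X^±} : X^± → X^± is a Banach isomorphism, and A : V ∩ X → X is a map with A(θ) = θ which is strictly Fréchet differentiable at θ with A'(θ) = B(θ)|_X, i.e. ‖A(x₁) − B(θ)x₁ − A(x₂) + B(θ)x₂‖_X ≤ K_r‖x₁ − x₂‖_X for x₁,x₂ ∈ B_X(θ,r), where K_r → 0 as r → 0. Then there exist r₀ > 0 and a unique map h : B_{H⁰}(θ, r₀) → X^± with h(θ) = θ and (I − P⁰)A(z + h(z)) = θ for all z ∈ B_{H⁰}(θ, r₀); moreover h is Lipschitz continuous with ‖h(z₁) − h(z₂)‖_X ≤ 2‖z₁ − z₂‖_X. -/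
/-!
Lyapunov–Schmidt reduction. Let `Q : X → X^±` be the projection along `H⁰`, so that
`(I − P⁰) y = 0` iff `Q y = 0`. The equation `(I − P⁰) A (z + x) = 0` is then the fixed-point
equation of `S z x = x − (B(θ)|_{X^±})⁻¹ Q A (z + x)`. Since `A` is strictly differentiable at `0`
with derivative `B(θ)`, which kills `H⁰` and is inverted on `X^±`, the map `S` is
`1/2`-Lipschitz in `z` and in `x` jointly near `0`. Banach's fixed point theorem on a closed ball
gives the unique solution `h z`, and `‖h z₁ − h z₂‖ ≤ ½ ‖h z₁ − h z₂‖ + ½ ‖z₁ − z₂‖`.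
-/

open Set Filter Topology NNReal

theorem exists_fixedPoints_of_uniform_contraction {Z Y : Type*} [PseudoMetricSpace Z]
    [MetricSpace Y] {S : Z → Y → Y} {U : Set Z} {s : Set Y} (hs : IsComplete s)
    (hne : s.Nonempty) (hmaps : ∀ z ∈ U, MapsTo (S z) s s) {k : ℝ≥0} (hk : k < 1) {L : ℝ}
    (hS : ∀ z₁ ∈ U, ∀ z₂ ∈ U, ∀ y₁ ∈ s, ∀ y₂ ∈ s,
      dist (S z₁ y₁) (S z₂ y₂) ≤ L * dist z₁ z₂ + k * dist y₁ y₂) :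
    ∃ f : Z → Y, (∀ z ∈ U, f z ∈ s ∧ S z (f z) = f z) ∧
      (∀ z ∈ U, ∀ y ∈ s, S z y = y → y = f z) ∧
      ∀ z₁ ∈ U, ∀ z₂ ∈ U, dist (f z₁) (f z₂) ≤ L / (1 - k) * dist z₁ z₂ := by
  have hk' : 0 < 1 - (k : ℝ) := sub_pos.2 (mod_cast hk)
  have hcontr : ∀ z ∈ U, ∀ y₁ ∈ s, ∀ y₂ ∈ s, dist (S z y₁) (S z y₂) ≤ k * dist y₁ y₂ :=
    fun z hz y₁ hy₁ y₂ hy₂ => by simpa using hS z hz z hz y₁ hy₁ y₂ hy₂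
  have hfix : ∀ z ∈ U, ∃ y ∈ s, S z y = y := by
    intro z hz
    obtain ⟨y₀, hy₀⟩ := hne
    have hf : ContractingWith k ((hmaps z hz).restrict (S z) s s) :=
      ⟨hk, LipschitzWith.of_dist_le_mul fun y₁ y₂ => hcontr z hz _ y₁.2 _ y₂.2⟩
    obtain ⟨y, hy, hfy, -⟩ := hf.exists_fixedPoint' hs (hmaps z hz) hy₀ (edist_ne_top _ _)
    exact ⟨y, hy, hfy⟩
  have : Nonempty Y := ⟨hne.some⟩
  choose! f hfs hff using hfix
  have huniq : ∀ z ∈ U, ∀ y ∈ s, S z y = y → y = f z := by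
    intro z hz y hy hSy
    have h := hcontr z hz y hy (f z) (hfs z hz)
    rw [hSy, hff z hz] at h
    exact dist_le_zero.1 (by nlinarith [dist_nonneg (x := y) (y := f z)])
  refine ⟨f, fun z hz => ⟨hfs z hz, hff z hz⟩, huniq, fun z₁ hz₁ z₂ hz₂ => ?_⟩
  have h := hS z₁ hz₁ z₂ hz₂ _ (hfs z₁ hz₁) _ (hfs z₂ hz₂)
  rw [hff z₁ hz₁, hff z₂ hz₂] at h
  rw [div_mul_eq_mul_div, le_div_iff₀ hk']
  linarith

section ImplicitFunction

variable {𝕜 Z X Y : Type*} [NontriviallyNormedField 𝕜]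
  [NormedAddCommGroup Z] [NormedSpace 𝕜 Z] [NormedAddCommGroup X] [NormedSpace 𝕜 X]
  [NormedAddCommGroup Y] [NormedSpace 𝕜 Y]
  {F : X → Y} {T : X →L[𝕜] Y} {ι : Y →L[𝕜] X} {J : Z →L[𝕜] X}

theorem ApproximatesLinearOn.norm_sub_sub_le_of_leftInverse {s : Set X} {c : ℝ≥0}
    (hF : ApproximatesLinearOn F T s c) (hTι : ∀ y, T (ι y) = y) (hTJ : ∀ z, T (J z) = 0)
    {z₁ z₂ : Z} {y₁ y₂ : Y} (h₁ : J z₁ + ι y₁ ∈ s) (h₂ : J z₂ + ι y₂ ∈ s) :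
    ‖(y₁ - F (J z₁ + ι y₁)) - (y₂ - F (J z₂ + ι y₂))‖ ≤
      c * ‖J‖ * ‖z₁ - z₂‖ + c * ‖ι‖ * ‖y₁ - y₂‖ := by
  have hT : T ((J z₁ + ι y₁) - (J z₂ + ι y₂)) = y₁ - y₂ := by
    simp only [map_sub, map_add, hTι, hTJ]; abel
  have hdiff : (J z₁ + ι y₁) - (J z₂ + ι y₂) = J (z₁ - z₂) + ι (y₁ - y₂) := by
    simp only [map_sub]; abel
  calc ‖(y₁ - F (J z₁ + ι y₁)) - (y₂ - F (J z₂ + ι y₂))‖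
      = ‖F (J z₁ + ι y₁) - F (J z₂ + ι y₂) - T ((J z₁ + ι y₁) - (J z₂ + ι y₂))‖ := by
        rw [hT, ← norm_neg]; congr 1; abel
    _ ≤ c * ‖J (z₁ - z₂) + ι (y₁ - y₂)‖ := hdiff ▸ hF _ h₁ _ h₂
    _ ≤ c * (‖J‖ * ‖z₁ - z₂‖ + ‖ι‖ * ‖y₁ - y₂‖) := by
        gcongr
        exact (norm_add_le _ _).trans (add_le_add (J.le_opNorm _) (ι.le_opNorm _))
    _ = _ := by ring


theorem HasStrictFDerivAt.exists_pos_norm_implicitStep_sub_le (hF : HasStrictFDerivAt F T 0)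
    (hTι : ∀ y, T (ι y) = y) (hTJ : ∀ z, T (J z) = 0) :
    ∃ ρ > 0, ∀ z₁ z₂ y₁ y₂, ‖z₁‖ < ρ → ‖z₂‖ < ρ → ‖y₁‖ ≤ ρ → ‖y₂‖ ≤ ρ →
      ‖(y₁ - F (J z₁ + ι y₁)) - (y₂ - F (J z₂ + ι y₂))‖ ≤
        1 / 2 * ‖z₁ - z₂‖ + 1 / 2 * ‖y₁ - y₂‖ := by
  set c : ℝ≥0 := (2 * (‖ι‖₊ + ‖J‖₊ + 1))⁻¹
  have hc : (c : ℝ) * (‖ι‖ + ‖J‖ + 1) = 1 / 2 := by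
    simp only [c, NNReal.coe_inv, NNReal.coe_mul, NNReal.coe_add, coe_nnnorm, NNReal.coe_one,
      NNReal.coe_ofNat]
    field_simp
  obtain ⟨s, hs, hFs⟩ := hF.approximates_deriv_on_nhds (Or.inr (by positivity : 0 < c))
  obtain ⟨r, hr, hrs⟩ := Metric.mem_nhds_iff.1 hs
  refine ⟨r / (‖ι‖ + ‖J‖ + 1), by positivity, fun z₁ z₂ y₁ y₂ hz₁ hz₂ hy₁ hy₂ => ?_⟩
  have hmem : ∀ z y, ‖z‖ < r / (‖ι‖ + ‖J‖ + 1) → ‖y‖ ≤ r / (‖ι‖ + ‖J‖ + 1) →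
      J z + ι y ∈ s := fun z y hz hy => hrs <| by
    rw [mem_ball_zero_iff, lt_div_iff₀ (by positivity)] at *
    calc ‖J z + ι y‖ ≤ ‖J‖ * ‖z‖ + ‖ι‖ * ‖y‖ :=
          (norm_add_le _ _).trans (add_le_add (J.le_opNorm _) (ι.le_opNorm _))
      _ < r := by
        rw [le_div_iff₀ (by positivity)] at hy
        nlinarith [norm_nonneg J, norm_nonneg ι, norm_nonneg z, norm_nonneg y]
  refine (hFs.norm_sub_sub_le_of_leftInverse hTι hTJ (hmem _ _ hz₁ hy₁)
    (hmem _ _ hz₂ hy₂)).trans ?_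
  gcongr <;> nlinarith [norm_nonneg J, norm_nonneg ι]

theorem exists_implicitFunction_of_hasStrictFDerivAt [CompleteSpace Y]
    (hF : HasStrictFDerivAt F T 0) (hF0 : F 0 = 0)
    (hTι : ∀ y, T (ι y) = y) (hTJ : ∀ z, T (J z) = 0) :
    ∃ ρ > 0, ∃ f : Z → Y, (∀ z, ‖z‖ < ρ → ‖f z‖ ≤ ρ ∧ F (J z + ι (f z)) = 0) ∧
      (∀ z y, ‖z‖ < ρ → ‖y‖ ≤ ρ → F (J z + ι y) = 0 → y = f z) ∧
      ∀ z₁ z₂, ‖z₁‖ < ρ → ‖z₂‖ < ρ → ‖f z₁ - f z₂‖ ≤ ‖z₁ - z₂‖ := by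
  obtain ⟨ρ, hρ, hS⟩ := hF.exists_pos_norm_implicitStep_sub_le hTι hTJ
  set S : Z → Y → Y := fun z y => y - F (J z + ι y)
  have hmaps : ∀ z ∈ Metric.ball (0 : Z) ρ,
      MapsTo (S z) (Metric.closedBall 0 ρ) (Metric.closedBall 0 ρ) := by
    intro z hz y hy
    rw [mem_ball_zero_iff] at hz
    rw [mem_closedBall_zero_iff] at hy ⊢
    have h := hS z 0 y 0 hz (by simpa using hρ) hy (by simpa using hρ.le)
    simp only [map_zero, add_zero, hF0, sub_zero] at h
    show ‖y - F (J z + ι y)‖ ≤ ρ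
    linarith
  obtain ⟨f, hf, hfuniq, hflip⟩ := exists_fixedPoints_of_uniform_contraction
    Metric.isClosed_closedBall.isComplete (Metric.nonempty_closedBall.2 hρ.le) hmaps
    (k := 1 / 2) (L := 1 / 2) (by norm_num) fun z₁ hz₁ z₂ hz₂ y₁ hy₁ y₂ hy₂ => by
      rw [mem_ball_zero_iff] at hz₁ hz₂
      rw [mem_closedBall_zero_iff] at hy₁ hy₂
      simpa only [dist_eq_norm, one_div, NNReal.coe_inv, NNReal.coe_ofNat]
        using hS z₁ z₂ y₁ y₂ hz₁ hz₂ hy₁ hy₂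
  have hfixed : ∀ z y, S z y = y ↔ F (J z + ι y) = 0 := fun z y => sub_eq_self
  refine ⟨ρ, hρ, f, fun z hz => ?_, fun z y hz hy hzy => ?_, fun z₁ z₂ hz₁ hz₂ => ?_⟩
  · obtain ⟨hfz, hSf⟩ := hf z (mem_ball_zero_iff.2 hz)
    exact ⟨mem_closedBall_zero_iff.1 hfz, (hfixed z _).1 hSf⟩
  · exact hfuniq z (mem_ball_zero_iff.2 hz) y (mem_closedBall_zero_iff.2 hy) ((hfixed z y).2 hzy)
  · have h := hflip z₁ (mem_ball_zero_iff.2 hz₁) z₂ (mem_ball_zero_iff.2 hz₂)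
    rw [dist_eq_norm, dist_eq_norm] at h
    exact h.trans_eq (by norm_num)

end ImplicitFunction

theorem hasStrictFDerivAt_zero_of_modulus {𝕜 E F : Type*} [NontriviallyNormedField 𝕜]
    [NormedAddCommGroup E] [NormedSpace 𝕜 E] [NormedAddCommGroup F] [NormedSpace 𝕜 F]
    {A : E → F} {B : E →L[𝕜] F} {K : ℝ → ℝ} (hK : Tendsto K (𝓝[>] 0) (𝓝 0))
    (hAB : ∀ r > (0 : ℝ), ∀ x₁ x₂ : E, ‖x₁‖ < r → ‖x₂‖ < r →
      ‖A x₁ - B x₁ - A x₂ + B x₂‖ ≤ K r * ‖x₁ - x₂‖) :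
    HasStrictFDerivAt A B 0 := by
  refine .of_isLittleO (Asymptotics.IsLittleO.of_bound fun ε hε => ?_)
  obtain ⟨r, hKr, hr⟩ := ((hK.eventually (gt_mem_nhds hε)).and self_mem_nhdsWithin).exists
  refine Metric.eventually_nhds_iff.2 ⟨r, hr, fun p hp => ?_⟩
  rw [Prod.dist_eq, max_lt_iff, dist_zero_right, dist_zero_right] at hp
  calc ‖A p.1 - A p.2 - B (p.1 - p.2)‖ = ‖A p.1 - B p.1 - A p.2 + B p.2‖ := by
        rw [map_sub]; congr 1; abel
    _ ≤ K r * ‖p.1 - p.2‖ := hAB r hr p.1 p.2 hp.1 hp.2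
    _ ≤ ε * ‖p.1 - p.2‖ := by gcongr

theorem exists_projection_onto_comap_orthogonal {H X : Type*} [NormedAddCommGroup H]
    [InnerProductSpace ℝ H] [NormedAddCommGroup X] [NormedSpace ℝ X] {i : X →L[ℝ] H}
    (hinj : Function.Injective i) {K : Submodule ℝ H} [K.HasOrthogonalProjection]
    {j : K →L[ℝ] X} (hj : ∀ z, i (j z) = z) :
    ∃ Q : X →L[ℝ] Submodule.comap i.toLinearMap Kᗮ,
      (∀ u : Submodule.comap i.toLinearMap Kᗮ, Q u = u) ∧ ∀ x, Q x = 0 ↔ i x ∈ K := by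
  set Q₀ : X →L[ℝ] X := ContinuousLinearMap.id ℝ X - j ∘L K.orthogonalProjectionOnto ∘L i
  have hQ₀ : ∀ x, Q₀ x = x - j (K.orthogonalProjectionOnto (i x)) := fun x => rfl
  have hmem : ∀ x, Q₀ x ∈ Submodule.comap i.toLinearMap Kᗮ := fun x => by
    have h := K.sub_starProjection_mem_orthogonal (i x)
    rwa [K.starProjection_apply, ← hj, ← map_sub, ← hQ₀] at h
  refine ⟨Q₀.codRestrict _ hmem, fun u => ?_, fun x => ?_⟩
  · ext
    rw [ContinuousLinearMap.coe_codRestrict_apply, hQ₀,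
      K.orthogonalProjectionOnto_eq_zero_iff.2 (show i u ∈ Kᗮ from u.2), map_zero, sub_zero]
  · rw [← Subtype.val_inj, ContinuousLinearMap.coe_codRestrict_apply, hQ₀,
      ZeroMemClass.coe_zero, sub_eq_zero]
    constructor
    · intro hx
      rw [hx, hj]
      exact (K.orthogonalProjectionOnto (i x)).2
    · intro hx
      apply hinj
      rw [hj, K.orthogonalProjectionOnto_mem_subspace_eq_self ⟨i x, hx⟩]

theorem statement10_general {H X : Type*} [NormedAddCommGroup H] [InnerProductSpace ℝ H]
    [NormedAddCommGroup X] [NormedSpace ℝ X] [CompleteSpace X]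
    (i : X →L[ℝ] H) (hinj : Function.Injective i)
    (H0 : Submodule ℝ H) (hfin : FiniteDimensional ℝ H0)
    (j : H0 →ₗ[ℝ] X) (hj : ∀ z : H0, i (j z) = (z : H))
    (B0 : H →L[ℝ] H)
    (hker : LinearMap.ker (B0 : H →ₗ[ℝ] H) = H0)
    (B0X : X →L[ℝ] X) (hB0X : ∀ x : X, i (B0X x) = B0 (i x))
    (e : (Submodule.comap (i.toLinearMap) H0ᗮ) ≃L[ℝ]
         (Submodule.comap (i.toLinearMap) H0ᗮ))
    (he : ∀ u : Submodule.comap (i.toLinearMap) H0ᗮ, (e u : X) = B0X (u : X))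
    (A : X → X) (hA0 : A 0 = 0)
    (K : ℝ → ℝ)
    (hK : Filter.Tendsto K (nhdsWithin 0 (Set.Ioi (0 : ℝ))) (nhds 0))
    (hstrict : ∀ r > (0 : ℝ), ∀ x₁ x₂ : X, ‖x₁‖ < r → ‖x₂‖ < r →
      ‖A x₁ - B0X x₁ - A x₂ + B0X x₂‖ ≤ K r * ‖x₁ - x₂‖) :
    ∃ r₀ > (0 : ℝ), ∃ h : H0 → X,
      h 0 = 0 ∧
      (∀ z : H0, ‖(z : H)‖ < r₀ → i (h z) ∈ H0ᗮ) ∧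
      (∀ z : H0, ‖(z : H)‖ < r₀ → ‖h z‖ ≤ r₀) ∧
      (∀ z : H0, ‖(z : H)‖ < r₀ → i (A (j z + h z)) ∈ H0) ∧
      (∀ z₁ z₂ : H0, ‖(z₁ : H)‖ < r₀ → ‖(z₂ : H)‖ < r₀ →
        ‖h z₁ - h z₂‖ ≤ 2 * ‖(z₁ : H) - (z₂ : H)‖) ∧
      ∀ h' : H0 → X, h' 0 = 0 →
        (∀ z : H0, ‖(z : H)‖ < r₀ → i (h' z) ∈ H0ᗮ) →
        (∀ z : H0, ‖(z : H)‖ < r₀ → ‖h' z‖ ≤ r₀) →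
        (∀ z : H0, ‖(z : H)‖ < r₀ → i (A (j z + h' z)) ∈ H0) →
        ∀ z : H0, ‖(z : H)‖ < r₀ → h' z = h z := by
  have : CompleteSpace (Submodule.comap i.toLinearMap H0ᗮ) :=
    ((Submodule.isClosed_orthogonal H0).preimage i.continuous).completeSpace_coe
  set J : H0 →L[ℝ] X := LinearMap.toContinuousLinearMap j
  obtain ⟨Q, hQid, hQker⟩ := exists_projection_onto_comap_orthogonal hinj (j := J) hj
  have hBJ : ∀ z, B0X (J z) = 0 := fun z => hinj <| by
    have hz : (z : H) ∈ LinearMap.ker (B0 : H →ₗ[ℝ] H) := hker ▸ z.2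
    rw [hB0X, map_zero, show i (J z) = z from hj z]
    simpa using hz
  set T := e.symm.toContinuousLinearMap ∘L Q ∘L B0X
  have hF : HasStrictFDerivAt (fun x => e.symm (Q (A x))) T 0 :=
    (e.symm.toContinuousLinearMap ∘L Q).hasStrictFDerivAt.comp 0
      (hasStrictFDerivAt_zero_of_modulus hK hstrict)
  have hFzero : ∀ x, e.symm (Q (A x)) = 0 ↔ i (A x) ∈ H0 := fun x => by
    rw [e.symm.map_eq_zero_iff, hQker]
  obtain ⟨ρ, hρ, f, hf, hfuniq, hflip⟩ := exists_implicitFunction_of_hasStrictFDerivAt hF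
    (by simp [hA0]) (ι := Submodule.subtypeL _) (J := J)
    -- `B0X u = e u` lies in `X^±`, where `Q` is the identity
    (fun u => by simp [T, ← he, hQid]) (fun z => by simp [T, hBJ])
  refine ⟨ρ, hρ, fun z => f z, ?_, fun z _ => (f z).2, fun z hz => (hf z hz).1,
    fun z hz => (hFzero _).1 (hf z hz).2, fun z₁ z₂ hz₁ hz₂ => ?_, ?_⟩
  · show (f 0 : X) = 0
    rw [← hfuniq 0 0 (by simpa using hρ) (by simpa using hρ.le) (by simp [hA0])]
    rfl
  · exact (hflip z₁ z₂ hz₁ hz₂).trans (le_mul_of_one_le_left (norm_nonneg _) one_le_two)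
  · intro h' _ h'mem h'bd h'ker z hz
    exact congrArg Subtype.val
      (hfuniq z ⟨h' z, h'mem z hz⟩ hz (h'bd z hz) ((hFzero _).2 (h'ker z hz)))

/-- Implicit-function lemma (Lemma 3.1, first part). Here `X` is a Banach space densely
and continuously embedded in the Hilbert space `H` via `i`, `H⁰ = Ker B(θ)` is
finite-dimensional with a lift `j : H⁰ → X`, `X^± = {x ∈ X | i x ∈ H⁰ᗮ}`,
`B(θ)|_{X^±}` is a Banach isomorphism `e`, and `A : X → X` with `A(θ) = θ` is strictly
Fréchet differentiable at `θ` with derivative `B(θ)|_X`, with modulus `K r → 0`.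
Then there are `r₀ > 0` and a unique map `h : B_{H⁰}(θ,r₀) → X^±` with `h(θ) = θ` and
`(I − P⁰)A(z + h(z)) = θ` (i.e. `A(z + h(z)) ∈ H⁰`), and `h` is Lipschitz with
constant `2`. -/
theorem statement10 {H X : Type*} [NormedAddCommGroup H] [InnerProductSpace ℝ H]
    [CompleteSpace H] [NormedAddCommGroup X] [NormedSpace ℝ X] [CompleteSpace X]
    (i : X →L[ℝ] H) (hinj : Function.Injective i) (hdense : DenseRange i)
    (hile : ∀ x : X, ‖i x‖ ≤ ‖x‖)
    (H0 : Submodule ℝ H) (hfin : FiniteDimensional ℝ H0)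
    (j : H0 →ₗ[ℝ] X) (hj : ∀ z : H0, i (j z) = (z : H))
    (B0 : H →L[ℝ] H) (hB0sa : IsSelfAdjoint B0)
    (hker : LinearMap.ker (B0 : H →ₗ[ℝ] H) = H0)
    (B0X : X →L[ℝ] X) (hB0X : ∀ x : X, i (B0X x) = B0 (i x))
    (e : (Submodule.comap (i.toLinearMap) H0ᗮ) ≃L[ℝ]
         (Submodule.comap (i.toLinearMap) H0ᗮ))
    (he : ∀ u : Submodule.comap (i.toLinearMap) H0ᗮ, (e u : X) = B0X (u : X))
    (A : X → X) (hA0 : A 0 = 0)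
    (K : ℝ → ℝ)
    (hK : Filter.Tendsto K (nhdsWithin 0 (Set.Ioi (0 : ℝ))) (nhds 0))
    (hstrict : ∀ r > (0 : ℝ), ∀ x₁ x₂ : X, ‖x₁‖ < r → ‖x₂‖ < r →
      ‖A x₁ - B0X x₁ - A x₂ + B0X x₂‖ ≤ K r * ‖x₁ - x₂‖) :
    ∃ r₀ > (0 : ℝ), ∃ h : H0 → X,
      h 0 = 0 ∧
      (∀ z : H0, ‖(z : H)‖ < r₀ → i (h z) ∈ H0ᗮ) ∧
      (∀ z : H0, ‖(z : H)‖ < r₀ → ‖h z‖ ≤ r₀) ∧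
      (∀ z : H0, ‖(z : H)‖ < r₀ → i (A (j z + h z)) ∈ H0) ∧
      (∀ z₁ z₂ : H0, ‖(z₁ : H)‖ < r₀ → ‖(z₂ : H)‖ < r₀ →
        ‖h z₁ - h z₂‖ ≤ 2 * ‖(z₁ : H) - (z₂ : H)‖) ∧
      ∀ h' : H0 → X, h' 0 = 0 →
        (∀ z : H0, ‖(z : H)‖ < r₀ → i (h' z) ∈ H0ᗮ) →
        (∀ z : H0, ‖(z : H)‖ < r₀ → ‖h' z‖ ≤ r₀) →
        (∀ z : H0, ‖(z : H)‖ < r₀ → i (A (j z + h' z)) ∈ H0) →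
        ∀ z : H0, ‖(z : H)‖ < r₀ → h' z = h z :=
  statement10_general i hinj H0 hfin j hj B0 hker B0X hB0X e he A hA0 K hK hstrict
end

section
/- Under the hypotheses of the implicit-function lemma above, the map h : B_{H⁰}(θ, r₀) → X^± satisfying (I − P⁰)A(z + h(z)) = θ and h(θ) = θ is strictly Fréchet differentiable at θ ∈ H⁰ with h'(θ) = 0: for any ε > 0 there is δ₀ > 0 with ‖h(z₂) − h(z₁)‖_{X} ≤ 3C₁C₂ε ‖z₂ − z₁‖_X for all z₁, z₂ ∈ B_{H⁰}(θ, δ₀). -/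
/-!
Write `x = j z + h z`. The complementary projection `I − P⁰` kills `A x`, which lies in `H⁰`,
and fixes `B(θ) x = B(θ) (h z)`, which lies in `range B(θ) ⊆ (ker B(θ))ᗮ = H⁰ᗮ`. Applying it to
the remainder `A x₁ − B(θ) x₁ − A x₂ + B(θ) x₂` therefore yields `B(θ) (h z₂ − h z₁)`, so
`‖h z₂ − h z₁‖ ≤ C₁ C₂ K(r) ‖x₁ − x₂‖`. As `z ↦ j z + h z` is Lipschitz near `θ`, it suffices to
pick `r` with `K(r)` small and then `δ₀` so that both `xₖ` stay in the ball of radius `r`.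
-/

section ProjectionAlongSubspace

variable {X H : Type*} [NormedAddCommGroup X] [NormedSpace ℝ X]
  [NormedAddCommGroup H] [NormedSpace ℝ H]
  {i : X →L[ℝ] H} {P : H →L[ℝ] H} {Q : X →L[ℝ] X}

theorem apply_eq_zero_of_mem_of_eq_self (hinj : Function.Injective i) {S : Submodule ℝ H}
    (hPid : ∀ w ∈ S, P w = w) (hQ : ∀ x : X, i (Q x) = i x - P (i x))
    {x : X} (hx : i x ∈ S) : Q x = 0 :=
  hinj <| by rw [hQ, hPid _ hx, sub_self, map_zero]

theorem apply_eq_self_of_mem_of_eq_zero (hinj : Function.Injective i) {S : Submodule ℝ H}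
    (hPker : ∀ w ∈ S, P w = 0) (hQ : ∀ x : X, i (Q x) = i x - P (i x))
    {x : X} (hx : i x ∈ S) : Q x = x :=
  hinj <| by rw [hQ, hPker _ hx, sub_zero]

end ProjectionAlongSubspace

theorem IsSelfAdjoint.apply_mem_orthogonal_ker {H : Type*} [NormedAddCommGroup H]
    [InnerProductSpace ℝ H] [CompleteSpace H] {T : H →L[ℝ] H} (hT : IsSelfAdjoint T) (w : H) :
    T w ∈ (LinearMap.ker (T : H →ₗ[ℝ] H))ᗮ := by
  rw [← hT.isSymmetric.orthogonal_range]
  exact Submodule.le_orthogonal_orthogonal _ (LinearMap.mem_range_self _ w)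

theorem norm_le_of_restrict_symm_bound {X : Type*} [NormedAddCommGroup X] [NormedSpace ℝ X]
    {V : Submodule ℝ X} {T : X →L[ℝ] X} (e : V ≃L[ℝ] V) (he : ∀ u : V, (e u : X) = T u)
    {C : ℝ} (hC : ∀ u : V, ‖(e.symm u : X)‖ ≤ C * ‖(u : X)‖) {x : X} (hx : x ∈ V) :
    ‖x‖ ≤ C * ‖T x‖ := by
  simpa [he] using hC (e ⟨x, hx⟩)

theorem norm_add_sub_add_le {E F : Type*} [SeminormedAddCommGroup E] [NormedSpace ℝ E]
    [SeminormedAddCommGroup F] [NormedSpace ℝ F] (J : E →L[ℝ] F) {g : E → F} {L : ℝ}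
    {z₁ z₂ : E} (hg : ‖g z₁ - g z₂‖ ≤ L * ‖z₁ - z₂‖) :
    ‖(J z₁ + g z₁) - (J z₂ + g z₂)‖ ≤ (‖J‖ + L) * ‖z₁ - z₂‖ :=
  calc ‖(J z₁ + g z₁) - (J z₂ + g z₂)‖ = ‖J (z₁ - z₂) + (g z₁ - g z₂)‖ := by
        rw [map_sub]; abel_nf
    _ ≤ ‖J‖ * ‖z₁ - z₂‖ + L * ‖z₁ - z₂‖ := norm_add_le_of_le (J.le_opNorm _) hg
    _ = (‖J‖ + L) * ‖z₁ - z₂‖ := by ring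

theorem norm_add_lt_of_norm_lt_div {E F : Type*} [SeminormedAddCommGroup E] [NormedSpace ℝ E]
    [SeminormedAddCommGroup F] [NormedSpace ℝ F] (J : E →L[ℝ] F) {g : E → F} (hg0 : g 0 = 0)
    {L r : ℝ} (hL : 0 < ‖J‖ + L) {z : E} (hg : ‖g z - g 0‖ ≤ L * ‖z - 0‖)
    (hz : ‖z‖ < r / (‖J‖ + L)) : ‖J z + g z‖ < r :=
  calc ‖J z + g z‖ ≤ (‖J‖ + L) * ‖z‖ := by
        simpa [hg0] using norm_add_sub_add_le J hg
    _ < (‖J‖ + L) * (r / (‖J‖ + L)) := by gcongr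
    _ = r := by field_simp

theorem exists_pos_le_of_tendsto_nhdsWithin_Ioi {K : ℝ → ℝ}
    (hK : Filter.Tendsto K (nhdsWithin 0 (Set.Ioi 0)) (nhds 0)) {c : ℝ} (hc : 0 < c) :
    ∃ r > 0, K r ≤ c :=
  ((hK.eventually (Iic_mem_nhds hc)).and self_mem_nhdsWithin).exists.imp fun _ h => ⟨h.2, h.1⟩

theorem norm_sub_le_of_remainder {X H : Type*} [NormedAddCommGroup X] [NormedSpace ℝ X]
    [NormedAddCommGroup H] [InnerProductSpace ℝ H] [CompleteSpace H]
    {i : X →L[ℝ] H} (hinj : Function.Injective i) {H0 : Submodule ℝ H}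
    {B0 : H →L[ℝ] H} (hB0sa : IsSelfAdjoint B0) (hker : LinearMap.ker (B0 : H →ₗ[ℝ] H) = H0)
    {B0X : X →L[ℝ] X} (hB0X : ∀ x : X, i (B0X x) = B0 (i x))
    (e : (Submodule.comap (i.toLinearMap) H0ᗮ) ≃L[ℝ] (Submodule.comap (i.toLinearMap) H0ᗮ))
    (he : ∀ u : Submodule.comap (i.toLinearMap) H0ᗮ, (e u : X) = B0X (u : X))
    {C₁ C₂ : ℝ} (hC₁0 : 0 ≤ C₁)
    (hC₁ : ∀ u : Submodule.comap (i.toLinearMap) H0ᗮ, ‖(e.symm u : X)‖ ≤ C₁ * ‖(u : X)‖)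
    {P0 : H →L[ℝ] H} (hP0id : ∀ w ∈ H0, P0 w = w) (hP0ker : ∀ w ∈ H0ᗮ, P0 w = 0)
    {Ppm : X →L[ℝ] X} (hPpm : ∀ x : X, i (Ppm x) = i x - P0 (i x))
    (hC₂ : ∀ x : X, ‖Ppm x‖ ≤ C₂ * ‖x‖) {A : X → X} {y₁ y₂ u₁ u₂ : X}
    (hy₁ : B0X y₁ = 0) (hy₂ : B0X y₂ = 0) (hu₁ : i u₁ ∈ H0ᗮ) (hu₂ : i u₂ ∈ H0ᗮ)
    (hA₁ : i (A (y₁ + u₁)) ∈ H0) (hA₂ : i (A (y₂ + u₂)) ∈ H0) :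
    ‖u₂ - u₁‖ ≤ C₁ * C₂ *
      ‖A (y₁ + u₁) - B0X (y₁ + u₁) - A (y₂ + u₂) + B0X (y₂ + u₂)‖ := by
  have hPpmB0X : ∀ x : X, Ppm (B0X x) = B0X x := fun x =>
    apply_eq_self_of_mem_of_eq_zero hinj hP0ker hPpm
      (by rw [hB0X, ← hker]; exact hB0sa.apply_mem_orthogonal_ker _)
  have hPpm_remainder : Ppm (A (y₁ + u₁) - B0X (y₁ + u₁) - A (y₂ + u₂) + B0X (y₂ + u₂))
      = B0X (u₂ - u₁) := by
    simp only [map_add, map_sub, hPpmB0X, hy₁, hy₂,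
      apply_eq_zero_of_mem_of_eq_self hinj hP0id hPpm hA₁,
      apply_eq_zero_of_mem_of_eq_self hinj hP0id hPpm hA₂]
    abel
  have hu : u₂ - u₁ ∈ Submodule.comap (i.toLinearMap) H0ᗮ := by
    simpa using sub_mem hu₂ hu₁
  calc ‖u₂ - u₁‖ ≤ C₁ * ‖B0X (u₂ - u₁)‖ := norm_le_of_restrict_symm_bound e he hC₁ hu
    _ ≤ C₁ * (C₂ * ‖A (y₁ + u₁) - B0X (y₁ + u₁) - A (y₂ + u₂) + B0X (y₂ + u₂)‖) := by
      rw [← hPpm_remainder]; gcongr; exact hC₂ _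
    _ = _ := by ring
theorem statement11_general {H X : Type*} [NormedAddCommGroup H] [InnerProductSpace ℝ H]
    [CompleteSpace H] [NormedAddCommGroup X] [NormedSpace ℝ X]
    (i : X →L[ℝ] H) (hinj : Function.Injective i)
    (H0 : Submodule ℝ H) (hfin : FiniteDimensional ℝ H0)
    (j : H0 →ₗ[ℝ] X) (hj : ∀ z : H0, i (j z) = (z : H))
    (B0 : H →L[ℝ] H) (hB0sa : IsSelfAdjoint B0)
    (hker : LinearMap.ker (B0 : H →ₗ[ℝ] H) = H0)
    (B0X : X →L[ℝ] X) (hB0X : ∀ x : X, i (B0X x) = B0 (i x))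
    (e : (Submodule.comap (i.toLinearMap) H0ᗮ) ≃L[ℝ]
         (Submodule.comap (i.toLinearMap) H0ᗮ))
    (he : ∀ u : Submodule.comap (i.toLinearMap) H0ᗮ, (e u : X) = B0X (u : X))
    (A : X → X)
    (K : ℝ → ℝ)
    (hK : Filter.Tendsto K (nhdsWithin 0 (Set.Ioi (0 : ℝ))) (nhds 0))
    (hstrict : ∀ r > (0 : ℝ), ∀ x₁ x₂ : X, ‖x₁‖ < r → ‖x₂‖ < r →
      ‖A x₁ - B0X x₁ - A x₂ + B0X x₂‖ ≤ K r * ‖x₁ - x₂‖)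
    -- the constants C₁ = ‖(B(θ)|_{X^±})⁻¹‖ and C₂ = ‖(I−P⁰)‖_{L(X,X^±)}
    (C₁ C₂ : ℝ) (hC₁0 : 0 ≤ C₁) (hC₂0 : 0 ≤ C₂)
    (hC₁ : ∀ u : Submodule.comap (i.toLinearMap) H0ᗮ,
      ‖(e.symm u : X)‖ ≤ C₁ * ‖(u : X)‖)
    (P0 : H →L[ℝ] H) (hP0id : ∀ w ∈ H0, P0 w = w) (hP0ker : ∀ w ∈ H0ᗮ, P0 w = 0)
    (Ppm : X →L[ℝ] X) (hPpm : ∀ x : X, i (Ppm x) = i x - P0 (i x))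
    (hC₂ : ∀ x : X, ‖Ppm x‖ ≤ C₂ * ‖x‖)
    -- the implicit map `h` furnished by the first part of the lemma
    (r₀ : ℝ) (hr₀ : 0 < r₀) (h : H0 → X)
    (hh0 : h 0 = 0)
    (hhperp : ∀ z : H0, ‖(z : H)‖ < r₀ → i (h z) ∈ H0ᗮ)
    (hheq : ∀ z : H0, ‖(z : H)‖ < r₀ → i (A (j z + h z)) ∈ H0)
    (hhlip : ∀ z₁ z₂ : H0, ‖(z₁ : H)‖ < r₀ → ‖(z₂ : H)‖ < r₀ →
      ‖h z₁ - h z₂‖ ≤ 2 * ‖(z₁ : H) - (z₂ : H)‖) :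
    ∀ ε > (0 : ℝ), ∃ δ₀ > (0 : ℝ), δ₀ ≤ r₀ ∧
      ∀ z₁ z₂ : H0, ‖(z₁ : H)‖ < δ₀ → ‖(z₂ : H)‖ < δ₀ →
        ‖h z₂ - h z₁‖ ≤ 3 * C₁ * C₂ * ε * ‖(z₂ : H) - (z₁ : H)‖ := by
  intro ε hε
  set J := LinearMap.toContinuousLinearMap j
  have hJ2 : 0 < ‖J‖ + 2 := by positivity
  obtain ⟨r, hr, hKr⟩ := exists_pos_le_of_tendsto_nhdsWithin_Ioi hK
    (show 0 < 3 * ε / (‖J‖ + 2) by positivity)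
  refine ⟨min r₀ (r / (‖J‖ + 2)), by positivity, min_le_left _ _, fun z₁ z₂ hz₁ hz₂ => ?_⟩
  have hball : ∀ z : H0, ‖(z : H)‖ < min r₀ (r / (‖J‖ + 2)) → ‖j z + h z‖ < r := fun z hz =>
    norm_add_lt_of_norm_lt_div J hh0 hJ2
      (hhlip z 0 (hz.trans_le (min_le_left _ _)) (by simpa using hr₀))
      (hz.trans_le (min_le_right _ _))
  have hjker : ∀ z : H0, B0X (j z) = 0 := fun z => hinj <| by
    rw [hB0X, hj, map_zero]; exact LinearMap.mem_ker.mp (hker.symm ▸ z.2)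
  have hz₁r₀ := hz₁.trans_le (min_le_left _ _)
  have hz₂r₀ := hz₂.trans_le (min_le_left _ _)
  calc ‖h z₂ - h z₁‖
      ≤ C₁ * C₂ * ‖A (j z₁ + h z₁) - B0X (j z₁ + h z₁) - A (j z₂ + h z₂) + B0X (j z₂ + h z₂)‖ :=
        norm_sub_le_of_remainder hinj hB0sa hker hB0X e he hC₁0 hC₁ hP0id hP0ker hPpm hC₂
          (hjker z₁) (hjker z₂) (hhperp z₁ hz₁r₀) (hhperp z₂ hz₂r₀) (hheq z₁ hz₁r₀)
          (hheq z₂ hz₂r₀)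
    _ ≤ C₁ * C₂ * (K r * ‖(j z₁ + h z₁) - (j z₂ + h z₂)‖) := by
        gcongr; exact hstrict r hr _ _ (hball z₁ hz₁) (hball z₂ hz₂)
    _ ≤ C₁ * C₂ * (3 * ε / (‖J‖ + 2) * ‖(j z₁ + h z₁) - (j z₂ + h z₂)‖) := by gcongr
    _ ≤ C₁ * C₂ * (3 * ε / (‖J‖ + 2) * ((‖J‖ + 2) * ‖(z₂ : H) - (z₁ : H)‖)) := by
        rw [norm_sub_rev (z₂ : H)]; gcongr; exact norm_add_sub_add_le J (hhlip z₁ z₂ hz₁r₀ hz₂r₀)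
    _ = 3 * C₁ * C₂ * ε * ‖(z₂ : H) - (z₁ : H)‖ := by field_simp

/-- Strict Fréchet differentiability of the implicit map `h` at the origin with
`h'(θ) = 0` (Lemma 3.1, second part): under the hypotheses of the implicit-function
lemma, with `C₁` a bound for the inverse of `B(θ)|_{X^±}` and `C₂` a bound for the
projection `(I − P⁰)|_X : X → X^±`, for every `ε > 0` there is `δ₀ > 0` such that
`‖h(z₂) − h(z₁)‖_X ≤ 3C₁C₂ε‖z₂ − z₁‖` for all `z₁, z₂ ∈ B_{H⁰}(θ, δ₀)`. -/
theorem statement11 {H X : Type*} [NormedAddCommGroup H] [InnerProductSpace ℝ H]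
    [CompleteSpace H] [NormedAddCommGroup X] [NormedSpace ℝ X] [CompleteSpace X]
    (i : X →L[ℝ] H) (hinj : Function.Injective i) (hdense : DenseRange i)
    (hile : ∀ x : X, ‖i x‖ ≤ ‖x‖)
    (H0 : Submodule ℝ H) (hfin : FiniteDimensional ℝ H0)
    (j : H0 →ₗ[ℝ] X) (hj : ∀ z : H0, i (j z) = (z : H))
    (B0 : H →L[ℝ] H) (hB0sa : IsSelfAdjoint B0)
    (hker : LinearMap.ker (B0 : H →ₗ[ℝ] H) = H0)
    (B0X : X →L[ℝ] X) (hB0X : ∀ x : X, i (B0X x) = B0 (i x))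
    (e : (Submodule.comap (i.toLinearMap) H0ᗮ) ≃L[ℝ]
         (Submodule.comap (i.toLinearMap) H0ᗮ))
    (he : ∀ u : Submodule.comap (i.toLinearMap) H0ᗮ, (e u : X) = B0X (u : X))
    (A : X → X) (hA0 : A 0 = 0)
    (K : ℝ → ℝ)
    (hK : Filter.Tendsto K (nhdsWithin 0 (Set.Ioi (0 : ℝ))) (nhds 0))
    (hstrict : ∀ r > (0 : ℝ), ∀ x₁ x₂ : X, ‖x₁‖ < r → ‖x₂‖ < r →
      ‖A x₁ - B0X x₁ - A x₂ + B0X x₂‖ ≤ K r * ‖x₁ - x₂‖)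
    -- the constants C₁ = ‖(B(θ)|_{X^±})⁻¹‖ and C₂ = ‖(I−P⁰)‖_{L(X,X^±)}
    (C₁ C₂ : ℝ) (hC₁0 : 0 ≤ C₁) (hC₂0 : 0 ≤ C₂)
    (hC₁ : ∀ u : Submodule.comap (i.toLinearMap) H0ᗮ,
      ‖(e.symm u : X)‖ ≤ C₁ * ‖(u : X)‖)
    (P0 : H →L[ℝ] H) (hP0id : ∀ w ∈ H0, P0 w = w) (hP0ker : ∀ w ∈ H0ᗮ, P0 w = 0)
    (Ppm : X →L[ℝ] X) (hPpm : ∀ x : X, i (Ppm x) = i x - P0 (i x))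
    (hC₂ : ∀ x : X, ‖Ppm x‖ ≤ C₂ * ‖x‖)
    -- the implicit map `h` furnished by the first part of the lemma
    (r₀ : ℝ) (hr₀ : 0 < r₀) (h : H0 → X)
    (hh0 : h 0 = 0)
    (hhperp : ∀ z : H0, ‖(z : H)‖ < r₀ → i (h z) ∈ H0ᗮ)
    (hhball : ∀ z : H0, ‖(z : H)‖ < r₀ → ‖h z‖ ≤ r₀)
    (hheq : ∀ z : H0, ‖(z : H)‖ < r₀ → i (A (j z + h z)) ∈ H0)
    (hhlip : ∀ z₁ z₂ : H0, ‖(z₁ : H)‖ < r₀ → ‖(z₂ : H)‖ < r₀ →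
      ‖h z₁ - h z₂‖ ≤ 2 * ‖(z₁ : H) - (z₂ : H)‖) :
    ∀ ε > (0 : ℝ), ∃ δ₀ > (0 : ℝ), δ₀ ≤ r₀ ∧
      ∀ z₁ z₂ : H0, ‖(z₁ : H)‖ < δ₀ → ‖(z₂ : H)‖ < δ₀ →
        ‖h z₂ - h z₁‖ ≤ 3 * C₁ * C₂ * ε * ‖(z₂ : H) - (z₁ : H)‖ :=
  statement11_general i hinj H0 hfin j hj B0 hB0sa hker B0X hB0X e he A K hK hstrict C₁ C₂ hC₁0 hC₂0
    hC₁ P0 hP0id hP0ker Ppm hPpm hC₂ r₀ hr₀ h hh0 hhperp hheq hhlip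
end

section
/- Let (H, ‖·‖) be a normed vector space, δ > 0, and J : B_H(θ, 2δ) → ℝ continuous and continuously directionally differentiable with J(θ) = 0 and DJ(θ) = 0. Suppose DJ(x)x > p(‖x‖) for all x ∈ closed ball B̄_H(θ,δ)\{θ}, where p : (0,δ] → (0,∞) is non-decreasing. Then for every x with ‖x‖ = δ, one has J(x) > p(δ/2)/2. -/
/-!
Restrict `J` to the ray `g t = J (t • x)`. Directional derivatives are homogeneous in the
direction, so the hypothesis `DJ(tx)(tx) > p(tδ)` reads `t g'(t) > p(tδ) > 0`. The mean value
theorem on `[0, 1/2]` gives `J(x/2) > 0`, and on `[1/2, 1]` it gives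
`J(x) - J(x/2) = g'(s)/2 > p(sδ)/2 ≥ p(δ/2)/2` by monotonicity of `p`.
-/

open Set

theorem HasLineDerivAt.hasDerivAt_smul {E F : Type*} [AddCommGroup E] [Module ℝ E]
    [NormedAddCommGroup F] [NormedSpace ℝ F] {f : E → F} {f' : F} {v : E} {s : ℝ}
    (h : HasLineDerivAt ℝ f f' (s • v) v) : HasDerivAt (fun t : ℝ => f (t • v)) f' s := by
  have h' : HasDerivAt (fun t : ℝ => f (s • v + t • v)) f' (s - s) := by rwa [sub_self]
  simpa [← add_smul] using h'.comp_sub_const s s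

theorem half_lt_of_lt_mul_deriv {g g' q : ℝ → ℝ} (hg : ContinuousOn g (Icc 0 1))
    (hg0 : g 0 = 0) (hderiv : ∀ t ∈ Ioo (0 : ℝ) 1, HasDerivAt g (g' t) t)
    (hq_pos : ∀ t ∈ Ioo (0 : ℝ) 1, 0 < q t) (hq_mono : MonotoneOn q (Ioo 0 1))
    (hbound : ∀ t ∈ Ioo (0 : ℝ) 1, q t < t * g' t) :
    q (1 / 2) / 2 < g 1 := by
  have hg'_pos : ∀ t ∈ Ioo (0 : ℝ) 1, 0 < g' t := fun t ht =>
    pos_of_mul_pos_right ((hq_pos t ht).trans (hbound t ht)) ht.1.le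
  obtain ⟨s₁, hs₁, hslope₁⟩ := exists_hasDerivAt_eq_slope g g' (by norm_num : (0 : ℝ) < 1 / 2)
    (hg.mono (Icc_subset_Icc le_rfl (by norm_num)))
    (fun t ht => hderiv t ⟨ht.1, ht.2.trans (by norm_num)⟩)
  obtain ⟨s₂, hs₂, hslope₂⟩ := exists_hasDerivAt_eq_slope g g' (by norm_num : (1 / 2 : ℝ) < 1)
    (hg.mono (Icc_subset_Icc (by norm_num) le_rfl))
    (fun t ht => hderiv t ⟨(by norm_num : (0 : ℝ) < 1 / 2).trans ht.1, ht.2⟩)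
  have hs₁' : s₁ ∈ Ioo (0 : ℝ) 1 := ⟨hs₁.1, hs₁.2.trans (by norm_num)⟩
  have hs₂' : s₂ ∈ Ioo (0 : ℝ) 1 := ⟨(by norm_num : (0 : ℝ) < 1 / 2).trans hs₂.1, hs₂.2⟩
  have hhalf : g (1 / 2) = g' s₁ / 2 := by rw [hslope₁, hg0]; ring
  have hincr : g 1 - g (1 / 2) = g' s₂ / 2 := by rw [hslope₂]; ring
  have hq_le : q (1 / 2) ≤ g' s₂ :=
    calc q (1 / 2) ≤ q s₂ := hq_mono ⟨by norm_num, by norm_num⟩ hs₂' hs₂.1.le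
      _ ≤ s₂ * g' s₂ := (hbound s₂ hs₂').le
      _ ≤ g' s₂ := mul_le_of_le_one_left (hg'_pos s₂ hs₂').le hs₂.2.le
  linarith [hg'_pos s₁ hs₁']

theorem statement12_general {H : Type*} [NormedAddCommGroup H] [NormedSpace ℝ H]
    (δ : ℝ) (hδ : 0 < δ) (J : H → ℝ) (DJ : H → H → ℝ)
    (hJc : ContinuousOn J (Metric.ball 0 (2 * δ)))
    (hdiff : ∀ x ∈ Metric.ball (0 : H) (2 * δ), ∀ u : H,
      Filter.Tendsto (fun t : ℝ => t⁻¹ * (J (x + t • u) - J x))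
        (nhdsWithin 0 {(0 : ℝ)}ᶜ) (nhds (DJ x u)))
    (hJ0 : J 0 = 0)
    (p : ℝ → ℝ)
    (hp_pos : ∀ t ∈ Set.Ioc (0 : ℝ) δ, 0 < p t)
    (hp_mono : ∀ s t : ℝ, s ∈ Set.Ioc (0 : ℝ) δ → t ∈ Set.Ioc (0 : ℝ) δ →
      s ≤ t → p s ≤ p t)
    (hbound : ∀ x : H, ‖x‖ ≤ δ → x ≠ 0 → p ‖x‖ < DJ x x) :
    ∀ x : H, ‖x‖ = δ → p (δ / 2) / 2 < J x := by
  intro x hx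
  have hline : ∀ y ∈ Metric.ball (0 : H) (2 * δ), ∀ u, HasLineDerivAt ℝ J (DJ y u) y u :=
    fun y hy u => hasLineDerivAt_iff_tendsto_slope_zero.2 (hdiff y hy u)
  have hnorm : ∀ t ∈ Icc (0 : ℝ) 1, ‖t • x‖ = t * δ := fun t ht => by
    rw [norm_smul, Real.norm_of_nonneg ht.1, hx]
  have hball : MapsTo (fun t : ℝ => t • x) (Icc 0 1) (Metric.ball 0 (2 * δ)) := fun t ht => by
    rw [mem_ball_zero_iff, hnorm t ht]
    nlinarith [ht.2]
  have hIoc : ∀ t ∈ Ioo (0 : ℝ) 1, t * δ ∈ Ioc 0 δ := fun t ht =>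
    ⟨mul_pos ht.1 hδ, mul_le_of_le_one_left hδ.le ht.2.le⟩
  have hradial : ∀ t ∈ Ioo (0 : ℝ) 1, p (t * δ) < t * DJ (t • x) x := fun t ht => by
    have hmem := hball (Ioo_subset_Icc_self ht)
    have hhom : DJ (t • x) (t • x) = t * DJ (t • x) x :=
      (hline _ hmem (t • x)).unique ((hline _ hmem x).smul t)
    have hx0 : x ≠ 0 := norm_ne_zero_iff.1 (hx ▸ hδ.ne')
    rw [← hhom, ← hnorm t (Ioo_subset_Icc_self ht)]
    exact hbound _ (hnorm t (Ioo_subset_Icc_self ht) ▸ (hIoc t ht).2) (smul_ne_zero ht.1.ne' hx0)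
  have key := half_lt_of_lt_mul_deriv (g := fun t => J (t • x)) (g' := fun t => DJ (t • x) x)
    (q := fun t => p (t * δ)) (hJc.comp (by fun_prop) hball) (by simpa using hJ0)
    (fun t ht => (hline _ (hball (Ioo_subset_Icc_self ht)) x).hasDerivAt_smul)
    (fun t ht => hp_pos _ (hIoc t ht))
    (fun s hs t ht hst => hp_mono _ _ (hIoc s hs) (hIoc t ht) (by gcongr)) hradial
  simpa [div_eq_inv_mul] using key

/-- If `J` is continuous and continuously directionally differentiable on the ball
`B(θ, 2δ)` of a normed space, `J(θ) = 0`, `DJ(θ) = 0`, and `DJ(x)x > p(‖x‖)` on the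
punctured closed ball of radius `δ` with `p : (0,δ] → (0,∞)` non-decreasing, then
`J(x) > p(δ/2)/2` for every `x` with `‖x‖ = δ`. -/
theorem statement12 {H : Type*} [NormedAddCommGroup H] [NormedSpace ℝ H]
    (δ : ℝ) (hδ : 0 < δ) (J : H → ℝ) (DJ : H → H → ℝ)
    (hJc : ContinuousOn J (Metric.ball 0 (2 * δ)))
    (hdiff : ∀ x ∈ Metric.ball (0 : H) (2 * δ), ∀ u : H,
      Filter.Tendsto (fun t : ℝ => t⁻¹ * (J (x + t • u) - J x))
        (nhdsWithin 0 {(0 : ℝ)}ᶜ) (nhds (DJ x u)))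
    (hDcont : ContinuousOn (fun q : H × H => DJ q.1 q.2)
      (Metric.ball 0 (2 * δ) ×ˢ Set.univ))
    (hJ0 : J 0 = 0) (hDJ0 : ∀ u : H, DJ 0 u = 0)
    (p : ℝ → ℝ)
    (hp_pos : ∀ t ∈ Set.Ioc (0 : ℝ) δ, 0 < p t)
    (hp_mono : ∀ s t : ℝ, s ∈ Set.Ioc (0 : ℝ) δ → t ∈ Set.Ioc (0 : ℝ) δ →
      s ≤ t → p s ≤ p t)
    (hbound : ∀ x : H, ‖x‖ ≤ δ → x ≠ 0 → p ‖x‖ < DJ x x) :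
    ∀ x : H, ‖x‖ = δ → p (δ / 2) / 2 < J x :=
  statement12_general δ hδ J DJ hJc hdiff hJ0 p hp_pos hp_mono hbound
end

section
/- Let H be a Hilbert space with V ∋ θ open and L ∈ C²(V, ℝ). Let B(x) = d²L(x) ∈ L_s(H), and suppose 0 is either not in σ(B(θ)) or an isolated point of σ(B(θ)), with finite-dimensional kernel H⁰ and negative space H⁻. Define P(x) = P⁺B(x) − P⁻B(x) + P⁰ and Q(x) = 2P⁻B(x) + P⁰ + P⁰B(x), where P⁺, P⁻, P⁰ are the spectral orthogonal projections of B(θ). Then B(x) = P(x) + Q(x), Q(x) is a finite-rank (hence compact) operator, both P and Q depend continuously on x, and there exist δ > 0 and c > 0 such that (P(x)u, u) ≥ c‖u‖² for all u ∈ H and x ∈ B_H(θ, δ). -/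
/-!
Write `u = u⁰ + u⁺ + u⁻`. Since `B(θ)` is symmetric and kills `H⁰`, the quadratic form of
`P(θ) = (P⁺ − P⁻) B(θ) + P⁰` is `(B(θ)u⁺, u⁺) − (B(θ)u⁻, u⁻) + ‖u⁰‖² ≥ min {2a₀, 1} ‖u‖²`.
Coercivity survives perturbations of operator norm at most half the constant, and `x ↦ P(x)` is
continuous, so it holds with constant `min {2a₀, 1} / 2` on a ball around `θ`. The operator
`Q(x)` takes values in the finite-dimensional space `H⁰ ⊕ H⁻`, hence has finite rank and is
compact.
-/

open scoped RealInnerProductSpace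
open Filter Topology

theorem ContinuousLinearMap.isCompactOperator_of_finiteDimensional_range
    {E F : Type*} [NormedAddCommGroup E] [NormedSpace ℝ E] [NormedAddCommGroup F]
    [NormedSpace ℝ F] (T : E →L[ℝ] F) [FiniteDimensional ℝ (T : E →ₗ[ℝ] F).range] :
    IsCompactOperator T :=
  (isCompactOperator_of_locallyCompactSpace_dom T.rangeRestrict).clm_comp (Submodule.subtypeL _)

section Splitting

variable {E : Type*} [NormedAddCommGroup E] [NormedSpace ℝ E]

-- The operators `P(x)` and `Q(x)` of the paper, for `B = B(x)`.
def coercivePart (P0 Pp Pm B : E →L[ℝ] E) : E →L[ℝ] E := Pp ∘L B - Pm ∘L B + P0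

def compactPart (P0 Pm B : E →L[ℝ] E) : E →L[ℝ] E := 2 • (Pm ∘L B) - P0 + P0 ∘L B

variable {P0 Pp Pm : E →L[ℝ] E}

theorem coercivePart_add_compactPart (hsum : ∀ w, P0 w + Pp w + Pm w = w) (B : E →L[ℝ] E) :
    coercivePart P0 Pp Pm B + compactPart P0 Pm B = B := by
  ext u
  simp only [coercivePart, compactPart, add_apply, sub_apply, smul_apply,
    ContinuousLinearMap.comp_apply]
  linear_combination (norm := module) hsum (B u)

theorem range_compactPart_le {K0 Km : Submodule ℝ E} (hP0 : ∀ w, P0 w ∈ K0)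
    (hPm : ∀ w, Pm w ∈ Km) (B : E →L[ℝ] E) :
    (compactPart P0 Pm B : E →ₗ[ℝ] E).range ≤ K0 ⊔ Km := by
  rintro _ ⟨u, rfl⟩
  simp only [compactPart, ContinuousLinearMap.coe_coe, add_apply, sub_apply, smul_apply,
    ContinuousLinearMap.comp_apply]
  exact add_mem (sub_mem (Submodule.smul_of_tower_mem _ _ (Submodule.mem_sup_right (hPm _)))
    (Submodule.mem_sup_left (hP0 _))) (Submodule.mem_sup_left (hP0 _))

end Splitting

section Coercivity

variable {H : Type*} [NormedAddCommGroup H] [InnerProductSpace ℝ H]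

theorem le_inner_apply_self_of_norm_sub_le {T T₀ : H →L[ℝ] H} {m ε : ℝ}
    (hT₀ : ∀ u, m * ‖u‖ ^ 2 ≤ ⟪T₀ u, u⟫) (hT : ‖T - T₀‖ ≤ ε) (u : H) :
    (m - ε) * ‖u‖ ^ 2 ≤ ⟪T u, u⟫ := by
  have hdiff : |⟪(T - T₀) u, u⟫| ≤ ε * ‖u‖ ^ 2 :=
    calc |⟪(T - T₀) u, u⟫| ≤ ‖(T - T₀) u‖ * ‖u‖ := abs_real_inner_le_norm _ _
      _ ≤ ‖T - T₀‖ * ‖u‖ * ‖u‖ := by gcongr; exact (T - T₀).le_opNorm u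
      _ ≤ ε * ‖u‖ ^ 2 := by rw [mul_assoc, ← sq]; gcongr
  have hsplit : ⟪T u, u⟫ = ⟪T₀ u, u⟫ + ⟪(T - T₀) u, u⟫ := by
    rw [← inner_add_left, sub_apply, add_sub_cancel]
  linarith [hT₀ u, neg_abs_le ⟪(T - T₀) u, u⟫]

theorem eventually_le_inner_apply_self {X : Type*} [TopologicalSpace X] {T : X → H →L[ℝ] H}
    {x₀ : X} {m : ℝ} (hT : ContinuousAt T x₀) (hm : 0 < m)
    (hT₀ : ∀ u, m * ‖u‖ ^ 2 ≤ ⟪T x₀ u, u⟫) :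
    ∀ᶠ x in 𝓝 x₀, ∀ u, m / 2 * ‖u‖ ^ 2 ≤ ⟪T x u, u⟫ := by
  filter_upwards [hT.eventually (Metric.closedBall_mem_nhds _ (half_pos hm))] with x hx u
  rw [dist_eq_norm] at hx
  linarith [le_inner_apply_self_of_norm_sub_le hT₀ hx u]

theorem ContinuousLinearMap.isSymmetric_of_inner_apply_sub_eq_zero {P : H →L[ℝ] H}
    (horth : ∀ v w, ⟪P v, w - P w⟫ = 0) : (P : H →ₗ[ℝ] H).IsSymmetric := by
  have hP : ∀ v w, ⟪P v, w⟫ = ⟪P v, P w⟫ := fun v w => by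
    rw [← sub_eq_zero, ← inner_sub_right, horth]
  intro v w
  simp only [ContinuousLinearMap.coe_coe]
  rw [hP v w, real_inner_comm (P w) v, hP w v]
  exact real_inner_comm _ _

theorem inner_add_sub_eq_of_isSymmetric {B : H →ₗ[ℝ] H} (hB : B.IsSymmetric) (b c : H) :
    ⟪B (b + c), b - c⟫ = ⟪B b, b⟫ - ⟪B c, c⟫ := by
  have hcross : ⟪B c, b⟫ = ⟪B b, c⟫ := by rw [hB, real_inner_comm]
  rw [map_add, inner_sub_right, inner_add_left, inner_add_left, hcross]
  ring

variable {P0 Pp Pm : H →L[ℝ] H}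

theorem inner_coercivePart_apply_self (hsum : ∀ w, P0 w + Pp w + Pm w = w)
    (h0p : ∀ v w, ⟪P0 v, Pp w⟫ = 0) (h0m : ∀ v w, ⟪P0 v, Pm w⟫ = 0)
    (hpm : ∀ v w, ⟪Pp v, Pm w⟫ = 0) {B : H →L[ℝ] H} (hB : (B : H →ₗ[ℝ] H).IsSymmetric)
    (hker : ∀ w, B (P0 w) = 0) (u : H) :
    ⟪coercivePart P0 Pp Pm B u, u⟫ = ⟪B (Pp u), Pp u⟫ - ⟪B (Pm u), Pm u⟫ + ‖P0 u‖ ^ 2 := by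
  have hPp : (Pp : H →ₗ[ℝ] H).IsSymmetric :=
    ContinuousLinearMap.isSymmetric_of_inner_apply_sub_eq_zero fun v w => by
      have hw : w - Pp w = P0 w + Pm w := by linear_combination (norm := module) -hsum w
      rw [hw, inner_add_right, real_inner_comm, h0p, hpm, add_zero]
  have hPm : (Pm : H →ₗ[ℝ] H).IsSymmetric :=
    ContinuousLinearMap.isSymmetric_of_inner_apply_sub_eq_zero fun v w => by
      have hw : w - Pm w = P0 w + Pp w := by linear_combination (norm := module) -hsum w
      rw [hw, inner_add_right, real_inner_comm, h0m, real_inner_comm, hpm, add_zero]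
  have hP0 : ⟪P0 u, u⟫ = ‖P0 u‖ ^ 2 := by
    nth_rewrite 2 [← hsum u]
    rw [inner_add_right, inner_add_right, h0p, h0m, real_inner_self_eq_norm_sq, add_zero,
      add_zero]
  have hBu : B u = B (Pp u + Pm u) := by
    conv_lhs => rw [← hsum u]
    rw [add_assoc, map_add, hker, zero_add]
  have hform : ⟪coercivePart P0 Pp Pm B u, u⟫ = ⟪B u, Pp u - Pm u⟫ + ⟪P0 u, u⟫ := by
    simp only [coercivePart, add_apply, sub_apply, ContinuousLinearMap.comp_apply]
    rw [inner_add_left, inner_sub_left, inner_sub_right]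
    simp only [← ContinuousLinearMap.coe_coe, hPp _ u, hPm _ u]
  rw [hform, hP0, hBu]
  exact congrArg (· + _) (inner_add_sub_eq_of_isSymmetric hB _ _)

theorem norm_sq_eq_add_norm_sq_of_orthogonal (hsum : ∀ w, P0 w + Pp w + Pm w = w)
    (h0p : ∀ v w, ⟪P0 v, Pp w⟫ = 0) (h0m : ∀ v w, ⟪P0 v, Pm w⟫ = 0)
    (hpm : ∀ v w, ⟪Pp v, Pm w⟫ = 0) (u : H) :
    ‖u‖ ^ 2 = ‖P0 u‖ ^ 2 + ‖Pp u‖ ^ 2 + ‖Pm u‖ ^ 2 := by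
  conv_lhs => rw [← hsum u]
  rw [norm_add_sq_real, norm_add_sq_real, inner_add_left, h0p, h0m, hpm]
  ring

theorem min_mul_norm_sq_le_inner_coercivePart_apply_self (hsum : ∀ w, P0 w + Pp w + Pm w = w)
    (h0p : ∀ v w, ⟪P0 v, Pp w⟫ = 0) (h0m : ∀ v w, ⟪P0 v, Pm w⟫ = 0)
    (hpm : ∀ v w, ⟪Pp v, Pm w⟫ = 0) {B : H →L[ℝ] H} (hB : (B : H →ₗ[ℝ] H).IsSymmetric)
    (hker : ∀ w, B (P0 w) = 0) {a : ℝ} (hpos : ∀ w, a * ‖Pp w‖ ^ 2 ≤ ⟪B (Pp w), Pp w⟫)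
    (hneg : ∀ w, ⟪B (Pm w), Pm w⟫ ≤ -a * ‖Pm w‖ ^ 2) (u : H) :
    min a 1 * ‖u‖ ^ 2 ≤ ⟪coercivePart P0 Pp Pm B u, u⟫ := by
  rw [inner_coercivePart_apply_self hsum h0p h0m hpm hB hker,
    norm_sq_eq_add_norm_sq_of_orthogonal hsum h0p h0m hpm]
  nlinarith [hpos u, hneg u, min_le_left a 1, min_le_right a 1, sq_nonneg ‖P0 u‖,
    sq_nonneg ‖Pp u‖, sq_nonneg ‖Pm u‖]

end Coercivity

theorem statement16_general {H : Type*} [NormedAddCommGroup H] [InnerProductSpace ℝ H]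
    [CompleteSpace H]
    (V : Set H) (hVopen : IsOpen V) (h0V : (0 : H) ∈ V)
    (L : H → ℝ)
    (B : H → H →L[ℝ] H) (hsa : ∀ x ∈ V, IsSelfAdjoint (B x))
    (hBc : ContinuousOn B V)
    -- spectral decomposition data for `B(θ)`
    (H0 Hp Hm : Submodule ℝ H)
    (hfin0 : FiniteDimensional ℝ H0) (hfinm : FiniteDimensional ℝ Hm)
    (horth1 : Hp ≤ H0ᗮ) (horth2 : Hm ≤ H0ᗮ) (horth3 : Hp ≤ Hmᗮ)
    (hker : LinearMap.ker (B 0 : H →ₗ[ℝ] H) = H0)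
    (a₀ : ℝ) (ha₀ : 0 < a₀)
    (hpos : ∀ u ∈ Hp, 2 * a₀ * ‖u‖ ^ 2 ≤ ⟪B 0 u, u⟫)
    (hneg : ∀ u ∈ Hm, ⟪B 0 u, u⟫ ≤ -(2 * a₀) * ‖u‖ ^ 2)
    (P0 Pp Pm : H →L[ℝ] H)
    (hsum : ∀ w : H, P0 w + Pp w + Pm w = w)
    (hP0mem : ∀ w : H, P0 w ∈ H0)
    (hPpmem : ∀ w : H, Pp w ∈ Hp)
    (hPmmem : ∀ w : H, Pm w ∈ Hm) :
    (∀ x : H, B x =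
        (Pp ∘L B x - Pm ∘L B x + P0) + (2 • (Pm ∘L B x) - P0 + P0 ∘L B x)) ∧
      (∀ x : H, FiniteDimensional ℝ
        (LinearMap.range (((2 • (Pm ∘L B x) - P0 + P0 ∘L B x) : H →L[ℝ] H) : H →ₗ[ℝ] H))) ∧
      (∀ x : H, IsCompactOperator ((2 • (Pm ∘L B x) - P0 + P0 ∘L B x) : H →L[ℝ] H)) ∧
      ContinuousOn (fun x => Pp ∘L B x - Pm ∘L B x + P0) V ∧
      ContinuousOn (fun x => 2 • (Pm ∘L B x) - P0 + P0 ∘L B x) V ∧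
      ∃ δ > (0 : ℝ), ∃ c > (0 : ℝ), Metric.ball (0 : H) δ ⊆ V ∧
        ∀ x ∈ Metric.ball (0 : H) δ, ∀ u : H,
          c * ‖u‖ ^ 2 ≤ ⟪(Pp ∘L B x - Pm ∘L B x + P0) u, u⟫ := by
  have hm : 0 < min (2 * a₀) 1 := lt_min (by positivity) one_pos
  have hQfin : ∀ x, FiniteDimensional ℝ (compactPart P0 Pm (B x) : H →ₗ[ℝ] H).range :=
    fun x => Submodule.finiteDimensional_of_le (range_compactPart_le hP0mem hPmmem (B x))
  have hPc : ContinuousOn (fun x => Pp ∘L B x - Pm ∘L B x + P0) V := by fun_prop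
  have hcoercive : ∀ u, min (2 * a₀) 1 * ‖u‖ ^ 2 ≤ ⟪coercivePart P0 Pp Pm (B 0) u, u⟫ :=
    min_mul_norm_sq_le_inner_coercivePart_apply_self hsum
      (fun v w => Submodule.inner_right_of_mem_orthogonal (hP0mem v) (horth1 (hPpmem w)))
      (fun v w => Submodule.inner_right_of_mem_orthogonal (hP0mem v) (horth2 (hPmmem w)))
      (fun v w => Submodule.inner_left_of_mem_orthogonal (hPmmem w) (horth3 (hPpmem v)))
      (hsa 0 h0V).isSymmetric (fun w => hker ▸ hP0mem w : ∀ w, P0 w ∈ LinearMap.ker _)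
      (fun w => hpos _ (hPpmem w)) (fun w => hneg _ (hPmmem w))
  obtain ⟨δ, hδ, hball⟩ := Metric.eventually_nhds_iff_ball.mp <|
    (hVopen.eventually_mem h0V).and <|
    eventually_le_inner_apply_self (hPc.continuousAt (hVopen.mem_nhds h0V))
      hm hcoercive
  exact ⟨fun x => (coercivePart_add_compactPart hsum (B x)).symm, hQfin,
    fun x => have := hQfin x
      (compactPart P0 Pm (B x)).isCompactOperator_of_finiteDimensional_range,
    hPc, by fun_prop, δ, hδ, _, half_pos hm,
    fun x hx => (hball x hx).1, fun x hx => (hball x hx).2⟩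

/-- For `L ∈ C²(V,ℝ)` with Hessian operators `B(x) = d²L(x) ∈ L_s(H)` such that `0` is
at most an isolated point of `σ(B(θ))`, with spectral projections `P⁺, P⁻, P⁰` onto the
positive space `H⁺`, the finite-dimensional negative space `H⁻` and kernel `H⁰` of
`B(θ)` and spectral gap `2a₀`, the operators `P(x) = P⁺B(x) − P⁻B(x) + P⁰` and
`Q(x) = 2P⁻B(x) − P⁰ + P⁰B(x)` satisfy: `B(x) = P(x) + Q(x)`, `Q(x)` is finite-rank
(hence compact), `P` and `Q` depend continuously on `x`, and there are `δ > 0`, `c > 0`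
with `(P(x)u, u) ≥ c‖u‖²` for all `u ∈ H` and `x ∈ B_H(θ, δ)`. -/
theorem statement16 {H : Type*} [NormedAddCommGroup H] [InnerProductSpace ℝ H]
    [CompleteSpace H]
    (V : Set H) (hVopen : IsOpen V) (h0V : (0 : H) ∈ V)
    (L : H → ℝ) (L' : H → H →L[ℝ] ℝ) (L'' : H → H →L[ℝ] H →L[ℝ] ℝ)
    (hL' : ∀ x ∈ V, HasFDerivAt L (L' x) x)
    (hL'' : ∀ x ∈ V, HasFDerivAt L' (L'' x) x)
    (hL''c : ContinuousOn L'' V)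
    (B : H → H →L[ℝ] H) (hsa : ∀ x ∈ V, IsSelfAdjoint (B x))
    (hBrep : ∀ x ∈ V, ∀ u v : H, L'' x u v = ⟪B x u, v⟫)
    (hBc : ContinuousOn B V)
    -- `0` is at most an isolated point of the spectrum of `B(θ)`
    (hisol : (0 : ℝ) ∉ spectrum ℝ (B 0) ∨
      ∀ᶠ z in nhdsWithin (0 : ℝ) {(0 : ℝ)}ᶜ, z ∉ spectrum ℝ (B 0))
    -- spectral decomposition data for `B(θ)`
    (H0 Hp Hm : Submodule ℝ H)
    (hfin0 : FiniteDimensional ℝ H0) (hfinm : FiniteDimensional ℝ Hm)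
    (horth1 : Hp ≤ H0ᗮ) (horth2 : Hm ≤ H0ᗮ) (horth3 : Hp ≤ Hmᗮ)
    (hspan : H0 ⊔ Hp ⊔ Hm = ⊤)
    (hker : LinearMap.ker (B 0 : H →ₗ[ℝ] H) = H0)
    (a₀ : ℝ) (ha₀ : 0 < a₀)
    (hpos : ∀ u ∈ Hp, 2 * a₀ * ‖u‖ ^ 2 ≤ ⟪B 0 u, u⟫)
    (hneg : ∀ u ∈ Hm, ⟪B 0 u, u⟫ ≤ -(2 * a₀) * ‖u‖ ^ 2)
    (P0 Pp Pm : H →L[ℝ] H)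
    (hsum : ∀ w : H, P0 w + Pp w + Pm w = w)
    (hP0mem : ∀ w : H, P0 w ∈ H0) (hP0id : ∀ w ∈ H0, P0 w = w)
    (hPpmem : ∀ w : H, Pp w ∈ Hp) (hPpid : ∀ w ∈ Hp, Pp w = w)
    (hPmmem : ∀ w : H, Pm w ∈ Hm) (hPmid : ∀ w ∈ Hm, Pm w = w) :
    (∀ x : H, B x =
        (Pp ∘L B x - Pm ∘L B x + P0) + (2 • (Pm ∘L B x) - P0 + P0 ∘L B x)) ∧
      (∀ x : H, FiniteDimensional ℝ
        (LinearMap.range (((2 • (Pm ∘L B x) - P0 + P0 ∘L B x) : H →L[ℝ] H) : H →ₗ[ℝ] H))) ∧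
      (∀ x : H, IsCompactOperator ((2 • (Pm ∘L B x) - P0 + P0 ∘L B x) : H →L[ℝ] H)) ∧
      ContinuousOn (fun x => Pp ∘L B x - Pm ∘L B x + P0) V ∧
      ContinuousOn (fun x => 2 • (Pm ∘L B x) - P0 + P0 ∘L B x) V ∧
      ∃ δ > (0 : ℝ), ∃ c > (0 : ℝ), Metric.ball (0 : H) δ ⊆ V ∧
        ∀ x ∈ Metric.ball (0 : H) δ, ∀ u : H,
          c * ‖u‖ ^ 2 ≤ ⟪(Pp ∘L B x - Pm ∘L B x + P0) u, u⟫ :=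
  statement16_general V hVopen h0V L B hsa hBc H0 Hp Hm hfin0 hfinm horth1 horth2 horth3 hker a₀ ha₀
    hpos hneg P0 Pp Pm hsum hP0mem hPpmem hPmmem
end

section
/- Let H, H⁺, H⁻ be as in the parameterized Morse–Palais setting: Λ a topological space, J : Λ × B_H(θ,2δ) → ℝ continuous with each J(λ,·) continuously directionally differentiable, J(λ,θ) = 0, D₂J(λ,θ) = 0, and suppose H⁻ = {θ} and D₂J(λ,x)x > p(‖x‖) for all (λ,x) ∈ Λ × (B̄_H(θ,δ)\{θ}) with p : (0,δ] → (0,∞) non-decreasing. Define ψ(λ,x) = (√(J(λ,x))/‖x‖)·x for x ≠ θ and ψ(λ,θ) = θ. Then ψ is well-defined (J(λ,x) > 0 for x ≠ θ), continuous, J(λ,x) = ‖ψ(λ,x)‖², and for each fixed λ the map x ↦ ψ(λ,x) is injective on B̄_H(θ,δ). -/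
/-!
By homogeneity of the directional derivative, `D₂J(λ, t e) e = D₂J(λ, t e)(t e) / t > 0`,
so `t ↦ J(λ, t e)` is strictly increasing on `[0, δ]` for every unit vector `e`; in
particular `J(λ, x) > J(λ, θ) = 0` for `x ≠ θ`. Since `ψ(λ, x) = √J(λ, x) • (x / ‖x‖)` has
the direction of `x` and length `√J(λ, x)`, equal values of `ψ(λ, ·)` give equal directions
and equal values of `J(λ, ·)`, hence equal norms by monotonicity along the common ray.
Continuity at `θ` comes from `‖ψ‖ ≤ √J → 0`.
-/

open Filter Topology Metric Set
open NormedSpace (normalize)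

theorem HasLineDerivAt.hasDerivAt_apply_smul {E : Type*} [AddCommGroup E] [Module ℝ E]
    {f : E → ℝ} {d t : ℝ} {x : E} (h : HasLineDerivAt ℝ f d (t • x) x) :
    HasDerivAt (fun s : ℝ => f (s • x)) d t := by
  have := HasDerivAt.comp_sub_const t t (by rw [sub_self]; exact h)
  simpa [← add_smul] using this

namespace NormedSpace

variable {V : Type*} [NormedAddCommGroup V] [NormedSpace ℝ V]

theorem div_norm_smul_eq_smul_normalize (a : ℝ) (x : V) :
    (a / ‖x‖) • x = a • normalize x := by
  rw [div_eq_mul_inv, mul_smul]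
  rfl

theorem normalize_smul_normalize {a : ℝ} {x : V} (ha : x ≠ 0 → 0 < a) :
    normalize (a • normalize x) = normalize x := by
  rcases eq_or_ne x 0 with rfl | hx
  · simp
  · rw [normalize_smul_of_pos (ha hx), normalize_normalize]

theorem _root_.ContinuousWithinAt.smul_normalize {X : Type*} [TopologicalSpace X] {F : X → ℝ}
    {g : X → V} {s : Set X} {q : X} (hF : ContinuousWithinAt F s q)
    (hg : ContinuousWithinAt g s q) (h0 : g q = 0 → F q = 0) :
    ContinuousWithinAt (fun y => F y • normalize (g y)) s q := by
  rcases eq_or_ne (g q) 0 with hq | hq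
  · rw [ContinuousWithinAt, hq, normalize_zero_eq_zero, smul_zero]
    have hF0 := hF.abs
    rw [ContinuousWithinAt, h0 hq, abs_zero] at hF0
    refine squeeze_zero_norm (fun y => ?_) hF0
    rw [norm_smul, Real.norm_eq_abs]
    refine mul_le_of_le_one_right (abs_nonneg _) ?_
    rcases eq_or_ne (g y) 0 with hy | hy
    · simp [hy]
    · exact (norm_normalize hy).le
  · have hn : ContinuousAt (normalize : V → V) (g q) :=
      (continuous_norm.continuousAt.inv₀ (norm_ne_zero_iff.2 hq)).smul continuousAt_id
    exact hF.smul (hn.comp_continuousWithinAt hg)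

end NormedSpace

section MonotoneAlongRays

open NormedSpace (normalize_smul_normalize norm_normalize norm_smul_normalize)

variable {E : Type*} [NormedAddCommGroup E] [NormedSpace ℝ E]
  {f : E → ℝ} {D : E → E → ℝ} {r : ℝ}

theorem strictMonoOn_apply_smul_of_norm_eq_one
    (hf : ∀ x ∈ closedBall (0 : E) r, ∀ u, HasLineDerivAt ℝ f (D x u) x u)
    (hD : ∀ x ∈ closedBall (0 : E) r, x ≠ 0 → 0 < D x x) {e : E} (he : ‖e‖ = 1) :
    StrictMonoOn (fun t : ℝ => f (t • e)) (Icc 0 r) := by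
  have hmem : ∀ t ∈ Icc 0 r, t • e ∈ closedBall (0 : E) r := fun t ht => by
    simpa [norm_smul, he, abs_of_nonneg ht.1] using ht.2
  have hderiv : ∀ t ∈ Icc 0 r, HasDerivAt (fun s : ℝ => f (s • e)) (D (t • e) e) t :=
    fun t ht => (hf _ (hmem t ht) e).hasDerivAt_apply_smul
  refine strictMonoOn_of_hasDerivWithinAt_pos (convex_Icc 0 r)
    (fun t ht => (hderiv t ht).continuousAt.continuousWithinAt)
    (fun t ht => (hderiv t (interior_subset ht)).hasDerivWithinAt) fun t ht => ?_
  rw [interior_Icc] at ht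
  have hmem' := hmem t (Ioo_subset_Icc_self ht)
  have hhom : D (t • e) (t • e) = t * D (t • e) e :=
    (hf _ hmem' (t • e)).unique ((hf _ hmem' e).smul t)
  have hpos := hD _ hmem' (smul_ne_zero ht.1.ne' (norm_ne_zero_iff.1 (by simp [he])))
  rw [hhom] at hpos
  exact pos_of_mul_pos_right hpos ht.1.le

theorem apply_zero_lt_apply
    (hf : ∀ x ∈ closedBall (0 : E) r, ∀ u, HasLineDerivAt ℝ f (D x u) x u)
    (hD : ∀ x ∈ closedBall (0 : E) r, x ≠ 0 → 0 < D x x) {x : E}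
    (hx : x ∈ closedBall (0 : E) r) (hx0 : x ≠ 0) : f 0 < f x := by
  have hmono := strictMonoOn_apply_smul_of_norm_eq_one hf hD (norm_normalize hx0)
  have hr : ‖x‖ ∈ Icc 0 r := ⟨norm_nonneg x, mem_closedBall_zero_iff.1 hx⟩
  simpa using hmono ⟨le_rfl, hr.1.trans hr.2⟩ hr (norm_pos_iff.2 hx0)

theorem eq_of_apply_eq_of_normalize_eq
    (hf : ∀ x ∈ closedBall (0 : E) r, ∀ u, HasLineDerivAt ℝ f (D x u) x u)
    (hD : ∀ x ∈ closedBall (0 : E) r, x ≠ 0 → 0 < D x x) {x₁ x₂ : E}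
    (hx₁ : x₁ ∈ closedBall (0 : E) r) (hx₂ : x₂ ∈ closedBall (0 : E) r)
    (hfx : f x₁ = f x₂) (hn : normalize x₁ = normalize x₂) :
    x₁ = x₂ := by
  rcases eq_or_ne x₁ 0 with rfl | hx₁0
  · simpa [eq_comm] using hn
  have hmono := strictMonoOn_apply_smul_of_norm_eq_one hf hD (norm_normalize hx₁0)
  have hnorm : ‖x₁‖ = ‖x₂‖ := by
    refine hmono.injOn ⟨norm_nonneg _, mem_closedBall_zero_iff.1 hx₁⟩
      ⟨norm_nonneg _, mem_closedBall_zero_iff.1 hx₂⟩ ?_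
    show f (‖x₁‖ • normalize x₁) = f (‖x₂‖ • normalize x₁)
    rw [norm_smul_normalize, hn, norm_smul_normalize]
    exact hfx
  rw [← norm_smul_normalize x₁, ← norm_smul_normalize x₂, hnorm, hn]

theorem sq_norm_sqrt_smul_normalize
    (hf : ∀ x ∈ closedBall (0 : E) r, ∀ u, HasLineDerivAt ℝ f (D x u) x u)
    (hD : ∀ x ∈ closedBall (0 : E) r, x ≠ 0 → 0 < D x x) (hf0 : f 0 = 0) {x : E}
    (hx : x ∈ closedBall (0 : E) r) : ‖√(f x) • normalize x‖ ^ 2 = f x := by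
  rcases eq_or_ne x 0 with rfl | hx0
  · simp [hf0]
  · have hpos : 0 < f x := hf0 ▸ apply_zero_lt_apply hf hD hx hx0
    rw [norm_smul, norm_normalize hx0, mul_one, Real.norm_of_nonneg (Real.sqrt_nonneg _),
      Real.sq_sqrt hpos.le]

theorem injOn_sqrt_smul_normalize
    (hf : ∀ x ∈ closedBall (0 : E) r, ∀ u, HasLineDerivAt ℝ f (D x u) x u)
    (hD : ∀ x ∈ closedBall (0 : E) r, x ≠ 0 → 0 < D x x) (hf0 : f 0 = 0) :
    InjOn (fun x => √(f x) • normalize x) (closedBall (0 : E) r) := by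
  intro x₁ hx₁ x₂ hx₂ h
  have hdir : ∀ x ∈ closedBall (0 : E) r, normalize (√(f x) • normalize x) = normalize x :=
    fun x hx => normalize_smul_normalize fun hx0 =>
      Real.sqrt_pos.2 (hf0 ▸ apply_zero_lt_apply hf hD hx hx0)
  refine eq_of_apply_eq_of_normalize_eq hf hD hx₁ hx₂ ?_ ?_
  · rw [← sq_norm_sqrt_smul_normalize hf hD hf0 hx₁,
      ← sq_norm_sqrt_smul_normalize hf hD hf0 hx₂]
    exact congrArg (‖·‖ ^ 2) h
  · rw [← hdir x₁ hx₁, ← hdir x₂ hx₂]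
    exact congrArg (fun v : E => normalize v) h

end MonotoneAlongRays

theorem statement17_general {Λ H : Type*} [TopologicalSpace Λ]
    [NormedAddCommGroup H] [NormedSpace ℝ H]
    (δ : ℝ) (hδ : 0 < δ) (J : Λ → H → ℝ) (D2J : Λ → H → H → ℝ)
    (hJc : ContinuousOn (fun q : Λ × H => J q.1 q.2)
      (Set.univ ×ˢ Metric.ball 0 (2 * δ)))
    (hdiff : ∀ lam : Λ, ∀ x ∈ Metric.ball (0 : H) (2 * δ), ∀ u : H,
      Filter.Tendsto (fun t : ℝ => t⁻¹ * (J lam (x + t • u) - J lam x))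
        (nhdsWithin 0 {(0 : ℝ)}ᶜ) (nhds (D2J lam x u)))
    (hJ0 : ∀ lam : Λ, J lam 0 = 0)
    (p : ℝ → ℝ)
    (hp_pos : ∀ t ∈ Set.Ioc (0 : ℝ) δ, 0 < p t)
    (hbound : ∀ lam : Λ, ∀ x : H, ‖x‖ ≤ δ → x ≠ 0 → p ‖x‖ < D2J lam x x) :
    ∀ ψ : Λ → H → H, (∀ lam : Λ, ψ lam 0 = 0) →
      (∀ (lam : Λ) (x : H), x ≠ 0 → ψ lam x = (Real.sqrt (J lam x) / ‖x‖) • x) →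
      (∀ lam : Λ, ∀ x : H, ‖x‖ ≤ δ → x ≠ 0 → 0 < J lam x) ∧
        ContinuousOn (fun q : Λ × H => ψ q.1 q.2)
          (Set.univ ×ˢ Metric.closedBall 0 δ) ∧
        (∀ lam : Λ, ∀ x : H, ‖x‖ ≤ δ → J lam x = ‖ψ lam x‖ ^ 2) ∧
        ∀ lam : Λ, ∀ x₁ x₂ : H, ‖x₁‖ ≤ δ → ‖x₂‖ ≤ δ →
          ψ lam x₁ = ψ lam x₂ → x₁ = x₂ := by
  intro ψ hψ0 hψ
  obtain rfl : ψ = fun lam x => √(J lam x) • normalize x := by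
    funext lam x
    rcases eq_or_ne x 0 with rfl | hx
    · simp [hψ0]
    · rw [hψ lam x hx, NormedSpace.div_norm_smul_eq_smul_normalize]
  have hball : closedBall (0 : H) δ ⊆ ball 0 (2 * δ) := closedBall_subset_ball (by linarith)
  have hline : ∀ lam, ∀ x ∈ closedBall (0 : H) δ, ∀ u,
      HasLineDerivAt ℝ (J lam) (D2J lam x u) x u := fun lam x hx u =>
    hasLineDerivAt_iff_tendsto_slope_zero.2 <| by
      simpa only [smul_eq_mul] using hdiff lam x (hball hx) u
  have hDpos : ∀ lam, ∀ x ∈ closedBall (0 : H) δ, x ≠ 0 → 0 < D2J lam x x :=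
    fun lam x hx hx0 =>
      have hx' : ‖x‖ ≤ δ := mem_closedBall_zero_iff.1 hx
      (hp_pos _ ⟨norm_pos_iff.2 hx0, hx'⟩).trans (hbound lam x hx' hx0)
  refine ⟨fun lam x hx hx0 => ?_, fun q hq => ?_, fun lam x hx => ?_,
    fun lam x₁ x₂ h₁ h₂ h => ?_⟩
  · simpa [hJ0] using
      apply_zero_lt_apply (hline lam) (hDpos lam) (mem_closedBall_zero_iff.2 hx) hx0
  · have hJq := hJc.mono (prod_mono subset_rfl hball) q hq
    exact hJq.sqrt.smul_normalize continuousWithinAt_snd fun h0 => by simp [h0, hJ0]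
  · exact (sq_norm_sqrt_smul_normalize (hline lam) (hDpos lam) (hJ0 lam)
      (mem_closedBall_zero_iff.2 hx)).symm
  · exact injOn_sqrt_smul_normalize (hline lam) (hDpos lam) (hJ0 lam)
      (mem_closedBall_zero_iff.2 h₁) (mem_closedBall_zero_iff.2 h₂) h

/-- Parameterized Morse–Palais, case `H⁻ = {θ}` (construction of `ψ`): with
`J : Λ × B(θ,2δ) → ℝ` continuous, each `J(λ,·)` continuously directionally
differentiable, `J(λ,θ) = 0`, `D₂J(λ,θ) = 0`, and `D₂J(λ,x)x > p(‖x‖)` on the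
punctured closed ball of radius `δ` with `p` non-decreasing and positive, the map
`ψ(λ,x) = (√(J(λ,x))/‖x‖)·x` (and `ψ(λ,θ) = θ`) is well-defined (`J(λ,x) > 0` for
`x ≠ θ`), continuous, satisfies `J(λ,x) = ‖ψ(λ,x)‖²`, and `ψ(λ,·)` is injective on
the closed ball of radius `δ`. -/
theorem statement17 {Λ H : Type*} [TopologicalSpace Λ]
    [NormedAddCommGroup H] [NormedSpace ℝ H]
    (δ : ℝ) (hδ : 0 < δ) (J : Λ → H → ℝ) (D2J : Λ → H → H → ℝ)
    (hJc : ContinuousOn (fun q : Λ × H => J q.1 q.2)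
      (Set.univ ×ˢ Metric.ball 0 (2 * δ)))
    (hdiff : ∀ lam : Λ, ∀ x ∈ Metric.ball (0 : H) (2 * δ), ∀ u : H,
      Filter.Tendsto (fun t : ℝ => t⁻¹ * (J lam (x + t • u) - J lam x))
        (nhdsWithin 0 {(0 : ℝ)}ᶜ) (nhds (D2J lam x u)))
    (hDcont : ∀ lam : Λ, ContinuousOn (fun q : H × H => D2J lam q.1 q.2)
      (Metric.ball 0 (2 * δ) ×ˢ Set.univ))
    (hJ0 : ∀ lam : Λ, J lam 0 = 0) (hD0 : ∀ (lam : Λ) (u : H), D2J lam 0 u = 0)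
    (p : ℝ → ℝ)
    (hp_pos : ∀ t ∈ Set.Ioc (0 : ℝ) δ, 0 < p t)
    (hp_mono : ∀ s t : ℝ, s ∈ Set.Ioc (0 : ℝ) δ → t ∈ Set.Ioc (0 : ℝ) δ →
      s ≤ t → p s ≤ p t)
    (hbound : ∀ lam : Λ, ∀ x : H, ‖x‖ ≤ δ → x ≠ 0 → p ‖x‖ < D2J lam x x) :
    ∀ ψ : Λ → H → H, (∀ lam : Λ, ψ lam 0 = 0) →
      (∀ (lam : Λ) (x : H), x ≠ 0 → ψ lam x = (Real.sqrt (J lam x) / ‖x‖) • x) →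
      (∀ lam : Λ, ∀ x : H, ‖x‖ ≤ δ → x ≠ 0 → 0 < J lam x) ∧
        ContinuousOn (fun q : Λ × H => ψ q.1 q.2)
          (Set.univ ×ˢ Metric.closedBall 0 δ) ∧
        (∀ lam : Λ, ∀ x : H, ‖x‖ ≤ δ → J lam x = ‖ψ lam x‖ ^ 2) ∧
        ∀ lam : Λ, ∀ x₁ x₂ : H, ‖x₁‖ ≤ δ → ‖x₂‖ ≤ δ →
          ψ lam x₁ = ψ lam x₂ → x₁ = x₂ :=
  statement17_general δ hδ J D2J hJc hdiff hJ0 p hp_pos hbound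
end
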